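/- arXiv:1707.09052 — 6 statements merged into one kernel-verified Lean document; each statement's English description precedes it below -/
import Mathlib

section
/- Let m be a positive integer and let 2 ≤ n ≤ (√3/√2)^{m-1}. Then there exists a coloring c: [n]² → {1,2,3} of the unordered pairs of {1,...,n} with 3 colors such that no subset of {1,...,n} of size ≥ m is ≤2-chromatic (i.e., such that c restricted to the pairs of any m-element subset takes all three colors). -/
/-!
Counting version of the probabilistic method. For a fixed set `A` of size `m`, a coloring on which
`A` is `≤2`-chromatic misses some colour `k` on all `p = C(m, 2)` pairs of `A`, so at most
`3 · 2^p · 3^(T - p)` of the `3^T` colorings make `A` bad. Summing over the `C(n, m)` sets `A`, the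
bad colorings are fewer than all colorings as soon as `3 · C(n, m) · 2^p < 3^p`; this follows from
`C(n, m) · m! ≤ n^m`, `m! > 3` and `n^m ≤ (3/2)^p`, the last being the hypothesis raised to the
power `m`.
-/

/-- A subset `A` is `≤2`-chromatic for a coloring `c` of unordered pairs if `c`
takes at most two distinct values on pairs of distinct elements of `A`. -/
def LeTwoChromatic {n : ℕ} (c : Sym2 (Fin n) → Fin 3) (A : Finset (Fin n)) : Prop :=
  ∃ i j : Fin 3, ∀ x ∈ A, ∀ y ∈ A, x ≠ y → c s(x, y) = i ∨ c s(x, y) = j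

open Finset

instance {n : ℕ} (c : Sym2 (Fin n) → Fin 3) (A : Finset (Fin n)) :
    Decidable (LeTwoChromatic c A) := by
  unfold LeTwoChromatic; infer_instance

lemma LeTwoChromatic.mono {n : ℕ} {c : Sym2 (Fin n) → Fin 3} {A B : Finset (Fin n)}
    (hBA : B ⊆ A) (h : LeTwoChromatic c A) : LeTwoChromatic c B := by
  obtain ⟨i, j, H⟩ := h
  exact ⟨i, j, fun x hx y hy => H x (hBA hx) y (hBA hy)⟩

lemma LeTwoChromatic.exists_forall_ne {n : ℕ} {c : Sym2 (Fin n) → Fin 3} {A : Finset (Fin n)}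
    (h : LeTwoChromatic c A) : ∃ k, ∀ e ∈ A.offDiag.image Sym2.mk.uncurry, c e ≠ k := by
  obtain ⟨i, j, H⟩ := h
  have avoid : ∀ i j : Fin 3, ∃ k, k ≠ i ∧ k ≠ j := by decide
  obtain ⟨k, hki, hkj⟩ := avoid i j
  refine ⟨k, ?_⟩
  simp only [mem_image, mem_offDiag, Prod.exists, Function.uncurry_apply_pair]
  rintro _ ⟨x, y, ⟨hx, hy, hxy⟩, rfl⟩
  rcases H x hx y hy hxy with h | h <;> rw [h]
  exacts [hki.symm, hkj.symm]

theorem Fintype.card_filter_forall_ne {α β : Type*} [Fintype α] [DecidableEq α] [Fintype β]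
    [DecidableEq β] (S : Finset α) (k : β) :
    #{f : α → β | ∀ a ∈ S, f a ≠ k} =
      (Fintype.card β - 1) ^ #S * Fintype.card β ^ (Fintype.card α - #S) := by
  have : ({f : α → β | ∀ a ∈ S, f a ≠ k} : Finset _) =
      Fintype.piFinset fun a => if a ∈ S then {k}ᶜ else univ := by
    ext f
    simp only [mem_filter, mem_univ, true_and, Fintype.mem_piFinset]
    refine forall_congr' fun a => ?_
    split_ifs <;> simp [*]
  rw [this, Fintype.card_piFinset]
  have hcompl : ({a | a ∉ S} : Finset α) = Sᶜ := by ext; simp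
  simp only [apply_ite Finset.card, prod_ite, prod_const, filter_univ_mem, hcompl, card_compl,
    card_singleton, card_univ]

lemma card_leTwoChromatic_mul_le {n : ℕ} (A : Finset (Fin n)) :
    #{c : Sym2 (Fin n) → Fin 3 | LeTwoChromatic c A} * 3 ^ (#A).choose 2 ≤
      3 * 2 ^ (#A).choose 2 * 3 ^ Fintype.card (Sym2 (Fin n)) := by
  set E := A.offDiag.image Sym2.mk.uncurry
  have hE : #E = (#A).choose 2 := Sym2.card_image_offDiag A
  have hsub : ({c | LeTwoChromatic c A} : Finset (Sym2 (Fin n) → Fin 3)) ⊆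
      univ.biUnion fun k => {c | ∀ e ∈ E, c e ≠ k} := by
    intro c hc
    obtain ⟨k, hk⟩ := (mem_filter.1 hc).2.exists_forall_ne
    exact mem_biUnion.2 ⟨k, mem_univ k, mem_filter.2 ⟨mem_univ c, hk⟩⟩
  have hcard : #{c : Sym2 (Fin n) → Fin 3 | LeTwoChromatic c A} ≤
      3 * (2 ^ #E * 3 ^ (Fintype.card (Sym2 (Fin n)) - #E)) := by
    refine (card_le_card hsub).trans (card_biUnion_le_card_mul _ _ _ fun k _ => ?_)
    rw [Fintype.card_filter_forall_ne, Fintype.card_fin]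
  have hET : #E ≤ Fintype.card (Sym2 (Fin n)) := card_le_univ E
  calc _ ≤ 3 * (2 ^ #E * 3 ^ (Fintype.card (Sym2 (Fin n)) - #E)) * 3 ^ #E := by
        rw [← hE]; gcongr
    _ = _ := by rw [← hE, ← Nat.sub_add_cancel hET, pow_add]; simp only [Nat.add_sub_cancel]; ring

lemma card_exists_leTwoChromatic_mul_le (n m : ℕ) :
    #{c : Sym2 (Fin n) → Fin 3 | ∃ A : Finset (Fin n), #A = m ∧ LeTwoChromatic c A} *
        3 ^ m.choose 2 ≤
      n.choose m * (3 * 2 ^ m.choose 2 * 3 ^ Fintype.card (Sym2 (Fin n))) := by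
  have hunion : ({c | ∃ A : Finset (Fin n), #A = m ∧ LeTwoChromatic c A} :
      Finset (Sym2 (Fin n) → Fin 3)) =
      (univ.powersetCard m).biUnion fun A => {c | LeTwoChromatic c A} := by
    ext c
    simp
  calc _ ≤ (∑ A ∈ univ.powersetCard m, #{c : Sym2 (Fin n) → Fin 3 | LeTwoChromatic c A}) *
        3 ^ m.choose 2 := by
        rw [hunion]; gcongr; exact card_biUnion_le
    _ ≤ ∑ _A ∈ univ.powersetCard m, 3 * 2 ^ m.choose 2 * 3 ^ Fintype.card (Sym2 (Fin n)) := by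
        rw [sum_mul]
        refine sum_le_sum fun A hA => ?_
        simpa only [(mem_powersetCard.1 hA).2] using card_leTwoChromatic_mul_le A
    _ = _ := by rw [sum_const, card_powersetCard, card_univ, Fintype.card_fin, smul_eq_mul]

theorem exists_forall_not_leTwoChromatic {n m : ℕ}
    (h : 3 * n.choose m * 2 ^ m.choose 2 < 3 ^ m.choose 2) :
    ∃ c : Sym2 (Fin n) → Fin 3, ∀ A : Finset (Fin n), m ≤ #A → ¬ LeTwoChromatic c A := by
  set T := Fintype.card (Sym2 (Fin n))
  have hlt : #{c : Sym2 (Fin n) → Fin 3 | ∃ A : Finset (Fin n), #A = m ∧ LeTwoChromatic c A} <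
      #(univ : Finset (Sym2 (Fin n) → Fin 3)) := by
    rw [card_univ, Fintype.card_fun, Fintype.card_fin]
    refine lt_of_mul_lt_mul_right ((card_exists_leTwoChromatic_mul_le n m).trans_lt ?_)
      (Nat.zero_le (3 ^ m.choose 2))
    calc n.choose m * (3 * 2 ^ m.choose 2 * 3 ^ T) = 3 * n.choose m * 2 ^ m.choose 2 * 3 ^ T := by
          ring
      _ < 3 ^ m.choose 2 * 3 ^ T := by gcongr
      _ = 3 ^ T * 3 ^ m.choose 2 := mul_comm _ _
  obtain ⟨c, -, hc⟩ := exists_mem_notMem_of_card_lt_card hlt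
  refine ⟨c, fun A hA hA2 => hc ?_⟩
  obtain ⟨B, hBA, hB⟩ := exists_subset_card_eq hA
  exact mem_filter.2 ⟨mem_univ c, B, hB, hA2.mono hBA⟩

lemma three_mul_choose_lt_pow {n m : ℕ} (hn : 0 < n) (hm : 3 ≤ m) : 3 * n.choose m < n ^ m := by
  have hfac : 3 < m.factorial := (Nat.factorial_le hm).trans_lt' (by decide)
  have hchoose : n.choose m * m.factorial ≤ n ^ m := by
    rw [mul_comm, ← Nat.descFactorial_eq_factorial_mul_choose]
    exact Nat.descFactorial_le_pow n m
  refine Nat.lt_of_mul_lt_mul_right (a := m.factorial) ?_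
  calc 3 * n.choose m * m.factorial ≤ 3 * n ^ m := by rw [mul_assoc]; gcongr
    _ < m.factorial * n ^ m := by gcongr
    _ = n ^ m * m.factorial := mul_comm _ _

lemma sqrt_three_div_sqrt_two_sq : (√3 / √2 : ℝ) ^ 2 = 3 / 2 := by
  rw [div_pow, Real.sq_sqrt (by norm_num), Real.sq_sqrt (by norm_num)]

lemma three_le_of_le_sqrt_three_div_sqrt_two_pow {n m : ℕ} (hn : 2 ≤ n)
    (h : (n : ℝ) ≤ (√3 / √2) ^ (m - 1)) : 3 ≤ m := by
  by_contra! hm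
  have hn' : (2 : ℝ) ≤ n := by exact_mod_cast hn
  have hsq : (n : ℝ) ^ 2 ≤ (3 / 2) ^ (m - 1) := by
    rw [← sqrt_three_div_sqrt_two_sq, ← pow_mul, mul_comm, pow_mul]
    gcongr
  have hsmall : (3 / 2 : ℝ) ^ (m - 1) ≤ (3 / 2) ^ 1 := pow_le_pow_right₀ (by norm_num) (by omega)
  nlinarith

lemma pow_mul_two_pow_choose_two_le {n m : ℕ} (h : (n : ℝ) ≤ (√3 / √2) ^ (m - 1)) :
    n ^ m * 2 ^ m.choose 2 ≤ 3 ^ m.choose 2 := by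
  have hexp : (m - 1) * m = 2 * m.choose 2 := by
    rw [Nat.choose_two_right, Nat.mul_div_cancel' (Nat.even_mul_pred_self m).two_dvd, mul_comm]
  have hpow : (n : ℝ) ^ m ≤ (3 / 2) ^ m.choose 2 := calc
    (n : ℝ) ^ m ≤ ((√3 / √2) ^ (m - 1)) ^ m := by gcongr
    _ = (3 / 2) ^ m.choose 2 := by rw [← pow_mul, hexp, pow_mul, sqrt_three_div_sqrt_two_sq]
  rw [← Nat.cast_le (α := ℝ)]
  push_cast
  calc (n : ℝ) ^ m * 2 ^ m.choose 2 ≤ (3 / 2) ^ m.choose 2 * 2 ^ m.choose 2 := by gcongr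
    _ = 3 ^ m.choose 2 := by rw [← mul_pow]; norm_num

theorem stmt3_general (m n : ℕ) (hn : 2 ≤ n)
    (hbound : (n : ℝ) ≤ (Real.sqrt 3 / Real.sqrt 2) ^ (m - 1)) :
    ∃ c : Sym2 (Fin n) → Fin 3,
      ∀ A : Finset (Fin n), m ≤ A.card → ¬ LeTwoChromatic c A := by
  have hm : 3 ≤ m := three_le_of_le_sqrt_three_div_sqrt_two_pow hn hbound
  apply exists_forall_not_leTwoChromatic
  calc 3 * n.choose m * 2 ^ m.choose 2 < n ^ m * 2 ^ m.choose 2 := by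
        gcongr
        exact three_mul_choose_lt_pow (by omega) hm
    _ ≤ 3 ^ m.choose 2 := pow_mul_two_pow_choose_two_le hbound

/-- If `2 ≤ n ≤ (√3/√2)^(m-1)`, there is a 3-coloring of the unordered pairs of `{1,…,n}`
with no `≤2`-chromatic set of size `≥ m`. -/
theorem stmt3 (m n : ℕ) (hm : 1 ≤ m) (hn : 2 ≤ n)
    (hbound : (n : ℝ) ≤ (Real.sqrt 3 / Real.sqrt 2) ^ (m - 1)) :
    ∃ c : Sym2 (Fin n) → Fin 3,
      ∀ A : Finset (Fin n), m ≤ A.card → ¬ LeTwoChromatic c A :=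
  stmt3_general m n hn hbound
end

section
/- Let n ≥ 2 and set R = 1/(ln√3 − ln√2). Then there exists a coloring c: [n]² → {1,2,3} such that every ≤2-chromatic subset of {1,...,n} has size at most R·ln n. -/
-- arithmetic lemma 1: 81 * 3^m ≤ 2^m * (m!)^2 for m ≥ 4
lemma aux_fact_nat : ∀ m : ℕ, 4 ≤ m → 81 * 3 ^ m ≤ 2 ^ m * (m.factorial) ^ 2 := by
  intro m hm
  induction m, hm using Nat.le_induction with
  | base => decide
  | succ m hm ih =>
    have h1 : (3:ℕ) * (2 ^ m * m.factorial ^ 2) ≤ 2 ^ (m+1) * ((m+1).factorial) ^ 2 := by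
      rw [Nat.factorial_succ]
      have he : 2 ^ (m+1) * ((m+1) * m.factorial)^2 = (2*(m+1)^2) * (2^m * m.factorial^2) := by
        rw [pow_succ]; ring
      rw [he]
      exact Nat.mul_le_mul_right _ (by nlinarith)
    calc 81 * 3 ^ (m+1) = 3 * (81 * 3 ^ m) := by ring
    _ ≤ 3 * (2 ^ m * m.factorial ^ 2) := by exact Nat.mul_le_mul_left 3 ih
    _ ≤ _ := h1

-- lemma 2: 9 * (3/2)^(m/2) ≤ m!  (rpow)
lemma aux_fact_real (m : ℕ) (hm : 4 ≤ m) :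
    (9:ℝ) * ((3:ℝ)/2) ^ ((m:ℝ)/2) ≤ (m.factorial : ℝ) := by
  have hb : (0:ℝ) < 3/2 := by norm_num
  have h1 : ((3:ℝ)/2) ^ ((m:ℝ)/2) = Real.sqrt (((3:ℝ)/2) ^ (m:ℕ)) := by
    rw [Real.sqrt_eq_rpow, ← Real.rpow_natCast (3/2 : ℝ) m, ← Real.rpow_mul hb.le]
    ring_nf
  rw [h1]
  have h2 : (81:ℝ) * ((3:ℝ)/2)^(m:ℕ) ≤ (m.factorial:ℝ)^2 := by
    have := aux_fact_nat m hm
    have h3 : (81:ℝ) * 3 ^ m ≤ 2 ^ m * (m.factorial:ℝ) ^ 2 := by exact_mod_cast this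
    have h4 : (0:ℝ) < 2 ^ m := by positivity
    rw [div_pow, ← mul_div_assoc, div_le_iff₀ h4]
    linarith
  have h5 : Real.sqrt ((81:ℝ) * ((3:ℝ)/2)^(m:ℕ)) ≤ Real.sqrt ((m.factorial:ℝ)^2) :=
    Real.sqrt_le_sqrt h2
  rw [Real.sqrt_mul (by norm_num) , Real.sqrt_sq (by positivity)] at h5
  calc (9:ℝ) * Real.sqrt (((3:ℝ)/2) ^ (m:ℕ)) = Real.sqrt 81 * Real.sqrt (((3:ℝ)/2) ^ (m:ℕ)) := by
        rw [show (81:ℝ) = 9^2 by norm_num, Real.sqrt_sq (by norm_num)]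
  _ ≤ _ := h5

lemma aux_key (n m : ℕ) (hm : 4 ≤ m) (hn : (n:ℝ) < ((3:ℝ)/2) ^ ((m:ℝ)/2)) :
    9 * n.choose m * 2 ^ (m.choose 2) < 3 ^ (m.choose 2) := by
  have hb : (0:ℝ) < 3/2 := by norm_num
  set K := m.choose 2 with hKdef
  -- 2 * K = m * (m-1)
  have hev : Even (m * (m - 1)) := by
    rcases Nat.even_or_odd m with h | h
    · exact h.mul_right _
    · refine Even.mul_left ?_ _
      rcases h with ⟨k, hk⟩; exact ⟨k, by omega⟩
  have h2K : 2 * K = m * (m - 1) := by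
    rw [hKdef, Nat.choose_two_right, Nat.mul_div_cancel' hev.two_dvd]
  have hKr : (K:ℝ) = (m:ℝ) * ((m:ℝ) - 1) / 2 := by
    have : ((2 * K : ℕ) : ℝ) = ((m * (m - 1) : ℕ) : ℝ) := by exact_mod_cast h2K
    push_cast [Nat.cast_sub (by omega : 1 ≤ m)] at this
    linarith
  set a := ((3:ℝ)/2) ^ ((m:ℝ)/2) with hadef
  have ha0 : 0 < a := Real.rpow_pos_of_pos hb _
  have h1 : (n:ℝ) ^ m < a ^ m :=
    pow_lt_pow_left₀ hn (Nat.cast_nonneg n) (by omega)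
  have h2 : a ^ m = ((3:ℝ)/2) ^ K * a := by
    rw [hadef, ← Real.rpow_natCast (((3:ℝ)/2) ^ ((m:ℝ)/2)) m, ← Real.rpow_mul hb.le]
    have : (m:ℝ)/2 * (m:ℝ) = (K:ℝ) + (m:ℝ)/2 := by rw [hKr]; ring
    rw [this, Real.rpow_add hb, Real.rpow_natCast]
  have hfact : (9:ℝ) * a ≤ (m.factorial : ℝ) := aux_fact_real m hm
  have hfpos : (0:ℝ) < (m.factorial : ℝ) := by exact_mod_cast m.factorial_pos
  have hc : ((n.choose m : ℝ)) ≤ (n:ℝ) ^ m / (m.factorial : ℝ) := Nat.choose_le_pow_div m n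
  have key : (9:ℝ) * (n.choose m) * 2 ^ K < 3 ^ K := by
    calc (9:ℝ) * (n.choose m) * 2 ^ K
        ≤ 9 * ((n:ℝ) ^ m / (m.factorial : ℝ)) * 2 ^ K := by gcongr
      _ < 9 * ((((3:ℝ)/2) ^ K * a) / (m.factorial : ℝ)) * 2 ^ K := by
          rw [← h2]; gcongr
      _ = ((3:ℝ)/2) ^ K * 2 ^ K * ((9 * a) / (m.factorial : ℝ)) := by ring
      _ ≤ ((3:ℝ)/2) ^ K * 2 ^ K * 1 := by
          gcongr
          exact (div_le_one hfpos).mpr hfact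
      _ = 3 ^ K := by rw [mul_one, ← mul_pow]; norm_num
  exact_mod_cast key

lemma exists_good (n m : ℕ)
    (hcount : 9 * n.choose m * 2 ^ (m.choose 2) < 3 ^ (m.choose 2)) :
    ∃ c : Sym2 (Fin n) → Fin 3, ∀ A : Finset (Fin n), A.card = m → ¬ LeTwoChromatic c A := by
  classical
  by_contra hcon
  push_neg at hcon
  set K := m.choose 2 with hKdef
  set T := Fintype.card (Sym2 (Fin n)) with hTdef
  set S : Finset (Fin n) → Finset (Sym2 (Fin n)) :=
    fun A => A.sym2.filter (fun p => ¬ p.IsDiag) with hSdef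
  set F : Finset (Fin n) → Fin 3 → Fin 3 → Finset (Sym2 (Fin n) → Fin 3) :=
    fun A i j => Fintype.piFinset
      (fun p => if p ∈ S A then ({i, j} : Finset (Fin 3)) else Finset.univ) with hFdef
  -- card of S A
  have hScard : ∀ A : Finset (Fin n), A.card = m → (S A).card = K := by
    intro A hA
    have hdiag : A.sym2.filter (fun p => p.IsDiag) = A.image Sym2.diag := by
      ext p
      simp only [Finset.mem_filter, Finset.mem_image]
      constructor
      · rintro ⟨hmem, hdi⟩
        induction p using Sym2.ind with
        | _ x y =>
          rw [Sym2.mk_isDiag_iff] at hdi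
          subst hdi
          exact ⟨x, (Finset.mk_mem_sym2_iff.mp hmem).1, rfl⟩
      · rintro ⟨x, hx, rfl⟩
        exact ⟨Finset.diag_mem_sym2_iff.mpr hx, Sym2.diag_isDiag x⟩
    have hsplit : (S A).card + (A.sym2.filter (fun p => p.IsDiag)).card = A.sym2.card := by
      rw [hSdef]
      rw [add_comm]
      exact Finset.card_filter_add_card_filter_not (fun p : Sym2 (Fin n) => p.IsDiag)
    rw [hdiag, Finset.card_image_of_injective _ Sym2.diag_injective, Finset.card_sym2, hA] at hsplit
    have hms : (m + 1).choose 2 = m + m.choose 2 := by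
      rw [Nat.choose_succ_succ, Nat.choose_one_right]
    omega
  -- card of F A i j
  have hFcard : ∀ (A : Finset (Fin n)) (i j : Fin 3), A.card = m →
      (F A i j).card ≤ 2 ^ K * 3 ^ (T - K) := by
    intro A i j hA
    rw [hFdef]
    rw [Fintype.card_piFinset]
    have hle : ∀ p : Sym2 (Fin n),
        ((if p ∈ S A then ({i, j} : Finset (Fin 3)) else Finset.univ)).card
          ≤ (if p ∈ S A then 2 else 3) := by
      intro p
      by_cases hp : p ∈ S A
      · simp only [hp, if_true]
        exact (Finset.card_insert_le _ _).trans (by simp)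
      · simp [hp]
    calc ∏ p : Sym2 (Fin n),
          ((if p ∈ S A then ({i, j} : Finset (Fin 3)) else Finset.univ)).card
        ≤ ∏ p : Sym2 (Fin n), (if p ∈ S A then 2 else 3) :=
          Finset.prod_le_prod' (fun p _ => hle p)
      _ = 2 ^ K * 3 ^ (T - K) := by
          rw [Finset.prod_ite (fun _ => (2:ℕ)) (fun _ => (3:ℕ)), Finset.prod_const,
            Finset.prod_const]
          have e1 : Finset.univ.filter (fun p => p ∈ S A) = S A := Finset.filter_univ_mem _
          have e2 : (Finset.univ.filter (fun p => p ∈ S A)).card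
              + (Finset.univ.filter (fun p => ¬ p ∈ S A)).card = T := by
            rw [hTdef, ← Finset.card_univ]
            exact Finset.card_filter_add_card_filter_not _
          rw [e1, hScard A hA] at e2
          have e3 : (Finset.univ.filter (fun p => ¬ p ∈ S A)).card = T - K := by omega
          rw [e1, hScard A hA, e3]
  -- univ is covered by the bad events
  have hsub : (Finset.univ : Finset (Sym2 (Fin n) → Fin 3)) ⊆
      (Finset.powersetCard m (Finset.univ : Finset (Fin n))).biUnion
        (fun A => (Finset.univ : Finset (Fin 3 × Fin 3)).biUnion
          (fun ij => F A ij.1 ij.2)) := by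
    intro c _
    obtain ⟨A, hAm, i, j, hij⟩ := hcon c
    refine Finset.mem_biUnion.mpr ⟨A, Finset.mem_powersetCard_univ.mpr hAm,
      Finset.mem_biUnion.mpr ⟨(i, j), Finset.mem_univ _, ?_⟩⟩
    rw [hFdef]
    rw [Fintype.mem_piFinset]
    intro p
    by_cases hp : p ∈ S A
    · simp only [hp, if_true]
      have hp' := hp
      rw [hSdef] at hp'
      obtain ⟨hps, hpd⟩ := Finset.mem_filter.mp hp'
      induction p using Sym2.ind with
      | _ x y =>
        rw [Sym2.mk_isDiag_iff] at hpd
        obtain ⟨hx, hy⟩ := Finset.mk_mem_sym2_iff.mp hps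
        rcases hij x hx y hy hpd with h | h <;> simp [h]
    · simp [hp]
  -- the counting contradiction
  have hKT : n.choose m ≠ 0 → K ≤ T := by
    intro hne
    have hmn : m ≤ n := by
      by_contra hgt
      exact hne (Nat.choose_eq_zero_of_lt (by omega))
    have hT : T = (n + 1).choose 2 := by
      rw [hTdef, ← Finset.card_univ, ← Finset.sym2_univ, Finset.card_sym2, Finset.card_univ,
        Fintype.card_fin]
    rw [hT, hKdef]
    exact Nat.choose_le_choose 2 (by omega)
  have htot : 3 ^ T ≤ n.choose m * (9 * (2 ^ K * 3 ^ (T - K))) := by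
    have h1 : (Finset.univ : Finset (Sym2 (Fin n) → Fin 3)).card = 3 ^ T := by
      rw [Finset.card_univ, Fintype.card_fun, Fintype.card_fin, hTdef]
    calc 3 ^ T = (Finset.univ : Finset (Sym2 (Fin n) → Fin 3)).card := h1.symm
      _ ≤ ((Finset.powersetCard m (Finset.univ : Finset (Fin n))).biUnion
            (fun A => (Finset.univ : Finset (Fin 3 × Fin 3)).biUnion
              (fun ij => F A ij.1 ij.2))).card := Finset.card_le_card hsub
      _ ≤ ∑ A ∈ Finset.powersetCard m (Finset.univ : Finset (Fin n)),
            ((Finset.univ : Finset (Fin 3 × Fin 3)).biUnion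
              (fun ij => F A ij.1 ij.2)).card := Finset.card_biUnion_le
      _ ≤ ∑ A ∈ Finset.powersetCard m (Finset.univ : Finset (Fin n)),
            (9 * (2 ^ K * 3 ^ (T - K))) := by
          refine Finset.sum_le_sum (fun A hA => ?_)
          have hAm : A.card = m := Finset.mem_powersetCard_univ.mp hA
          calc ((Finset.univ : Finset (Fin 3 × Fin 3)).biUnion
                (fun ij => F A ij.1 ij.2)).card
              ≤ ∑ ij : Fin 3 × Fin 3, (F A ij.1 ij.2).card := Finset.card_biUnion_le
            _ ≤ ∑ _ij : Fin 3 × Fin 3, (2 ^ K * 3 ^ (T - K)) :=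
                Finset.sum_le_sum (fun ij _ => hFcard A ij.1 ij.2 hAm)
            _ = 9 * (2 ^ K * 3 ^ (T - K)) := by
                rw [Finset.sum_const, Finset.card_univ]
                simp [mul_comm]
      _ = _ := by
          rw [Finset.sum_const, Finset.card_powersetCard, Finset.card_univ, Fintype.card_fin]
          simp [mul_comm]
  have hne : n.choose m ≠ 0 := by
    intro h0
    rw [h0] at htot
    simp at htot
  have hKT' := hKT hne
  have : 3 ^ T < 3 ^ T := by
    calc 3 ^ T ≤ n.choose m * (9 * (2 ^ K * 3 ^ (T - K))) := htot
      _ = (9 * n.choose m * 2 ^ K) * 3 ^ (T - K) := by ring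
      _ < 3 ^ K * 3 ^ (T - K) :=
          mul_lt_mul_of_pos_right hcount (pow_pos (by norm_num) _)
      _ = 3 ^ T := by rw [← pow_add, Nat.add_sub_cancel' hKT']
  exact absurd this (lt_irrefl _)

/-- For `n ≥ 2` and `R = 1/(ln √3 − ln √2)`, there is a 3-coloring of the unordered pairs
of `{1,…,n}` for which every `≤2`-chromatic set has size at most `R · ln n`. -/
theorem stmt4 (n : ℕ) (hn : 2 ≤ n) (R : ℝ)
    (hR : R = 1 / (Real.log (Real.sqrt 3) - Real.log (Real.sqrt 2))) :
    ∃ c : Sym2 (Fin n) → Fin 3,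
      ∀ A : Finset (Fin n), LeTwoChromatic c A → (A.card : ℝ) ≤ R * Real.log n := by
  have h23 : Real.log 2 < Real.log 3 := Real.log_lt_log (by norm_num) (by norm_num)
  set L : ℝ := Real.log 3 - Real.log 2 with hLdef
  have hL : 0 < L := by simp [hLdef]; linarith
  have hRL : R = 2 / L := by
    rw [hR, Real.log_sqrt (by norm_num), Real.log_sqrt (by norm_num), hLdef]
    field_simp
  have hRpos : 0 < R := by rw [hRL]; positivity
  have hlog2 : 0 < Real.log 2 := Real.log_pos (by norm_num)
  have hlogn : Real.log 2 ≤ Real.log n := by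
    apply Real.log_le_log (by norm_num)
    exact_mod_cast hn
  have hRlogpos : 0 ≤ R * Real.log n := by positivity
  set m : ℕ := ⌊R * Real.log n⌋₊ + 1 with hmdef
  have h3L : 3 * L ≤ 2 * Real.log 2 := by
    have h27 : Real.log (27:ℝ) ≤ Real.log 32 := Real.log_le_log (by norm_num) (by norm_num)
    have e1 : Real.log (27:ℝ) = 3 * Real.log 3 := by
      rw [show (27:ℝ) = 3 ^ (3:ℕ) by norm_num, Real.log_pow]; norm_num
    have e2 : Real.log (32:ℝ) = 5 * Real.log 2 := by
      rw [show (32:ℝ) = 2 ^ (5:ℕ) by norm_num, Real.log_pow]; norm_num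
    rw [e1, e2] at h27
    simp [hLdef]; linarith
  have hm4 : 4 ≤ m := by
    rw [hmdef]
    have h3 : (3:ℝ) ≤ R * Real.log n := by
      have : (3:ℝ) ≤ R * Real.log 2 := by
        rw [hRL, div_mul_eq_mul_div, le_div_iff₀ hL]
        linarith
      calc (3:ℝ) ≤ R * Real.log 2 := this
        _ ≤ R * Real.log n := by gcongr
    have : 3 ≤ ⌊R * Real.log n⌋₊ := Nat.le_floor (by exact_mod_cast h3)
    omega
  have hnm : (n:ℝ) < ((3:ℝ)/2) ^ ((m:ℝ)/2) := by
    have hfl : R * Real.log n < m := by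
      rw [hmdef]
      push_cast
      exact Nat.lt_floor_add_one _
    have hln : Real.log n < (m:ℝ) * L / 2 := by
      rw [hRL] at hfl
      rw [div_mul_eq_mul_div, div_lt_iff₀ hL] at hfl
      nlinarith [hfl]
    have e3 : ((3:ℝ)/2) ^ ((m:ℝ)/2) = Real.exp ((m:ℝ) * L / 2) := by
      rw [Real.rpow_def_of_pos (by norm_num)]
      congr 1
      rw [Real.log_div (by norm_num) (by norm_num), ← hLdef]
      ring
    rw [e3]
    calc (n:ℝ) = Real.exp (Real.log n) := (Real.exp_log (by positivity)).symm
      _ < Real.exp ((m:ℝ) * L / 2) := Real.exp_lt_exp.mpr hln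
  obtain ⟨c, hc⟩ := exists_good n m (aux_key n m hm4 hnm)
  refine ⟨c, fun A hA => ?_⟩
  have hlt : A.card < m := by
    by_contra hge
    push_neg at hge
    obtain ⟨B, hBA, hBm⟩ := Finset.exists_subset_card_eq hge
    refine hc B hBm ?_
    obtain ⟨i, j, hij⟩ := hA
    exact ⟨i, j, fun x hx y hy hxy => hij x (hBA hx) y (hBA hy) hxy⟩
  have : A.card ≤ ⌊R * Real.log n⌋₊ := by omega
  calc (A.card : ℝ) ≤ (⌊R * Real.log n⌋₊ : ℝ) := by exact_mod_cast this
    _ ≤ R * Real.log n := Nat.floor_le hRlogpos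
end

section
/- Let (Xₙ, Dⁿ) satisfy: Dⁿ takes values in {0} ∪ {εₙ3^{−m} : m ≥ 1} ∪ {δₙ, εₙ} with 0 < δₙ < εₙ < 2δₙ; Dⁿ((y,n,k),(y',n,k')) = βₙ ∈ {δₙ, εₙ} when k ≠ k'; = 0 when k = k' and y = y'; = εₙ3^{−Δ(y,y')} when k = k' and Δ(y,y') > 0; and ∈ {δₙ, εₙ} (symmetric, depending only on k and the restrictions of y, y' to a window around 0) when k = k' and Δ(y,y') = 0, with (εₙ − δₙ) < εₙ3^{−2T⁺(n)}. Then Dⁿ is a metric on Xₙ. -/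
noncomputable section

/-- The bijection `# : ℤ → ℕ` with `#(0)=0, #(1)=1, #(−1)=2, #(2)=3, #(−2)=4, …`. -/
def numZ : ℤ → ℕ := fun i => if 0 < i then 2 * i.toNat - 1 else 2 * (-i).toNat

/-- `Δ(y,z)`: the `#`-value of the `#`-first position where `y` and `z` differ
(`0` by convention when `y = z`, a case that is always excluded separately). -/
def DeltaZ {A : Type*} (y z : ℤ → A) : ℕ := sInf (numZ '' {i | y i ≠ z i})

/-- The left shift on two-sided sequences. -/
def shiftZ {A : Type*} (y : ℤ → A) : ℤ → A := fun i => y (i + 1)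

lemma numZ_eq_zero {i : ℤ} : numZ i = 0 ↔ i = 0 := by
  unfold numZ; split_ifs <;> omega

lemma numZ_le_window {i : ℤ} {Tp : ℕ} (h : |i| < (Tp : ℤ)) : numZ i ≤ 2 * Tp := by
  rw [abs_lt] at h; unfold numZ; split_ifs <;> omega

lemma DeltaZ_comm {A : Type*} (y z : ℤ → A) : DeltaZ y z = DeltaZ z y := by
  unfold DeltaZ
  congr 1
  ext i
  simp [ne_comm]

lemma eq_of_numZ_lt {A : Type*} {y z : ℤ → A} {i : ℤ} (h : numZ i < DeltaZ y z) :
    y i = z i := by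
  unfold DeltaZ at h
  by_contra hne
  exact absurd (Nat.sInf_le (⟨i, hne, rfl⟩ : numZ i ∈ numZ '' {j | y j ≠ z j})) (not_le.mpr h)

lemma DeltaZ_zero_iff {A : Type*} {y z : ℤ → A} (h : y ≠ z) :
    DeltaZ y z = 0 ↔ y 0 ≠ z 0 := by
  unfold DeltaZ
  constructor
  · intro h0
    rcases (Nat.sInf_eq_zero.mp h0) with h0' | hemp
    · obtain ⟨i, hi, hnum⟩ := h0'
      rwa [numZ_eq_zero.mp hnum] at hi
    · obtain ⟨i, hi⟩ := Function.ne_iff.mp h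
      exact absurd hemp (by simp [Set.eq_empty_iff_forall_notMem]; exact ⟨i, hi⟩)
  · intro h0
    have : (0 : ℕ) ∈ numZ '' {i | y i ≠ z i} := ⟨0, h0, by simp [numZ]⟩
    exact Nat.le_zero.mp (Nat.sInf_le this)

lemma min_le_DeltaZ {A : Type*} {y y' y'' : ℤ → A} (h : y ≠ y'') :
    min (DeltaZ y y') (DeltaZ y' y'') ≤ DeltaZ y y'' := by
  unfold DeltaZ
  obtain ⟨i, hi⟩ := Function.ne_iff.mp h
  have hne : (numZ '' {i | y i ≠ y'' i}).Nonempty := ⟨numZ i, i, hi, rfl⟩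
  obtain ⟨j, hj, hjnum⟩ := Nat.sInf_mem hne
  by_cases hjy : y j = y' j
  · have : y' j ≠ y'' j := fun hh => hj (hjy.trans hh)
    calc min (sInf (numZ '' {i | y i ≠ y' i})) (sInf (numZ '' {i | y' i ≠ y'' i})) ≤ sInf (numZ '' {i | y' i ≠ y'' i}) := min_le_right _ _
      _ ≤ numZ j := Nat.sInf_le (⟨j, this, rfl⟩ : numZ j ∈ numZ '' {i | y' i ≠ y'' i})
      _ = _ := hjnum
  · calc min (sInf (numZ '' {i | y i ≠ y' i})) (sInf (numZ '' {i | y' i ≠ y'' i})) ≤ sInf (numZ '' {i | y i ≠ y' i}) := min_le_left _ _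
      _ ≤ numZ j := Nat.sInf_le (⟨j, hjy, rfl⟩ : numZ j ∈ numZ '' {i | y i ≠ y' i})
      _ = _ := hjnum

/-- An ECn-metric (defined by clauses (Dn1)–(Dn32) with the stated parameter constraints)
is a metric on `Xₙ = {0,1}^ℤ × {0,…,T⁺(n)−1}`. -/
theorem stmt8 (Tp : ℕ) (hTp : 0 < Tp) (εn δn β : ℝ)
    (hδ : 0 < δn) (hδε : δn < εn) (hεδ : εn < 2 * δn)
    (hgap : εn - δn < εn * (3 : ℝ) ^ (-(2 * (Tp : ℤ))))
    (hβ : β = δn ∨ β = εn)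
    (D : ((ℤ → Bool) × ZMod Tp) → ((ℤ → Bool) × ZMod Tp) → ℝ)
    (h1 : ∀ (y y' : ℤ → Bool) (k k' : ZMod Tp), k ≠ k' → D (y, k) (y', k') = β)
    (h2 : ∀ (y : ℤ → Bool) (k : ZMod Tp), D (y, k) (y, k) = 0)
    (h31 : ∀ (y y' : ℤ → Bool) (k : ZMod Tp), y ≠ y' → 0 < DeltaZ y y' →
      D (y, k) (y', k) = εn * (3 : ℝ) ^ (-(DeltaZ y y' : ℤ)))
    (h32 : ∀ (y y' : ℤ → Bool) (k : ZMod Tp), y ≠ y' → DeltaZ y y' = 0 →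
      (D (y, k) (y', k) = δn ∨ D (y, k) (y', k) = εn) ∧ D (y, k) (y', k) = D (y', k) (y, k))
    (hdep : ∀ (k : ZMod Tp) (y y' z z' : ℤ → Bool), y ≠ y' → z ≠ z' →
      DeltaZ y y' = 0 → DeltaZ z z' = 0 →
      (∀ i : ℤ, |i| < (Tp : ℤ) → y i = z i) → (∀ i : ℤ, |i| < (Tp : ℤ) → y' i = z' i) →
      D (y, k) (y', k) = D (z, k) (z', k)) :
    (∀ a b, D a b = 0 ↔ a = b) ∧ (∀ a b, D a b = D b a) ∧
      (∀ a b c, D a c ≤ D a b + D b c) := by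
  have hε : 0 < εn := hδ.trans hδε
  have hβl : δn ≤ β := by rcases hβ with h | h <;> rw [h] <;> linarith
  have hβu : β ≤ εn := by rcases hβ with h | h <;> rw [h] <;> linarith
  have hpow_pos : ∀ m : ℤ, (0:ℝ) < (3 : ℝ) ^ m := fun m => zpow_pos (by norm_num) m
  have hmono : ∀ m n : ℕ, m ≤ n → (3 : ℝ) ^ (-(n:ℤ)) ≤ (3 : ℝ) ^ (-(m:ℤ)) := by
    intro m n h
    exact zpow_le_zpow_right₀ (by norm_num) (by omega)
  have hpow_le_one : ∀ m : ℕ, (3 : ℝ) ^ (-(m:ℤ)) ≤ 1 := by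
    intro m; simpa using hmono 0 m (Nat.zero_le m)
  have hgap' : εn - δn < εn * (3:ℝ) ^ (-((2*Tp : ℕ):ℤ)) := by
    rw [show -((2*Tp:ℕ):ℤ) = -(2*(Tp:ℤ)) by push_cast; ring]; exact hgap
  have hDbig : ∀ (u v : ℤ → Bool) (k : ZMod Tp), u ≠ v → DeltaZ u v = 0 →
      δn ≤ D (u,k) (v,k) := by
    intro u v k huv h0
    rcases (h32 u v k huv h0).1 with e | e <;> rw [e] <;> linarith
  have hD : ∀ (u v : ℤ → Bool) (k : ZMod Tp), u ≠ v →
      0 < D (u,k) (v,k) ∧ D (u,k) (v,k) ≤ εn := by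
    intro u v k huv
    rcases Nat.eq_zero_or_pos (DeltaZ u v) with h0 | hpos
    · rcases (h32 u v k huv h0).1 with e | e <;> rw [e] <;> constructor <;> linarith
    · rw [h31 u v k huv hpos]
      refine ⟨by positivity, ?_⟩
      have h1' := hpow_le_one (DeltaZ u v)
      nlinarith
  have hnn : ∀ a b, 0 ≤ D a b := by
    rintro ⟨y, k⟩ ⟨y', k'⟩
    by_cases hk : k = k'
    · subst hk
      by_cases hy : y = y'
      · subst hy; rw [h2]
      · exact (hD y y' k hy).1.le
    · rw [h1 y y' k k' hk]; linarith
  refine ⟨?_, ?_, ?_⟩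
  · rintro ⟨y, k⟩ ⟨y', k'⟩
    by_cases hk : k = k'
    · subst hk
      by_cases hy : y = y'
      · subst hy; simp [h2]
      · have := (hD y y' k hy).1
        constructor
        · intro h0; linarith
        · intro h0; rw [Prod.mk.injEq] at h0; exact absurd h0.1 hy
    · rw [h1 y y' k k' hk]
      constructor
      · intro h0; linarith
      · intro h0; rw [Prod.mk.injEq] at h0; exact absurd h0.2 hk
  · rintro ⟨y, k⟩ ⟨y', k'⟩
    by_cases hk : k = k'
    · subst hk
      by_cases hy : y = y'
      · subst hy; rfl
      · rcases Nat.eq_zero_or_pos (DeltaZ y y') with h0 | hpos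
        · exact (h32 y y' k hy h0).2
        · rw [h31 y y' k hy hpos,
            h31 y' y k (Ne.symm hy) (by rwa [DeltaZ_comm y' y]), DeltaZ_comm y y']
    · rw [h1 y y' k k' hk, h1 y' y k' k (Ne.symm hk)]
  · rintro ⟨y, k⟩ ⟨y', k'⟩ ⟨y'', k''⟩
    by_cases hk13 : k = k''
    · subst hk13
      by_cases hy13 : y = y''
      · subst hy13
        rw [h2]
        have := hnn (y, k) (y', k'); have := hnn (y', k') (y, k); linarith
      · by_cases hk12 : k' = k
        · subst hk12
          by_cases h12 : y = y'
          · subst h12; rw [h2]; linarith [le_refl (D (y, k') (y'', k'))]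
          · by_cases h23 : y' = y''
            · subst h23; rw [h2]; linarith [le_refl (D (y, k') (y', k'))]
            · -- core case: three distinct sequences, same k'
              rcases Nat.eq_zero_or_pos (DeltaZ y y'') with h3z | h3p
              · -- Δ(y,y'') = 0
                have hy0 : y 0 ≠ y'' 0 := (DeltaZ_zero_iff hy13).mp h3z
                rcases Nat.eq_zero_or_pos (DeltaZ y y') with h1z | h1p
                · rcases Nat.eq_zero_or_pos (DeltaZ y' y'') with h2z | h2p
                  · have := hDbig y y' k' h12 h1z
                    have := hDbig y' y'' k' h23 h2z
                    have := (hD y y'' k' hy13).2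
                    linarith
                  · -- Δ1 = 0, Δ2 > 0
                    rw [h31 y' y'' k' h23 h2p]
                    by_cases hbb : DeltaZ y' y'' ≤ 2 * Tp
                    · have hm := mul_le_mul_of_nonneg_left
                        (hmono (DeltaZ y' y'') (2*Tp) hbb) hε.le
                      have := hDbig y y' k' h12 h1z
                      have := (hD y y'' k' hy13).2
                      linarith
                    · push_neg at hbb
                      have hagree : ∀ i : ℤ, |i| < (Tp:ℤ) → y' i = y'' i := fun i hi =>
                        eq_of_numZ_lt (lt_of_le_of_lt (numZ_le_window hi) hbb)
                      have hde := hdep k' y y' y y'' h12 hy13 h1z h3z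
                        (fun i _ => rfl) hagree
                      rw [← hde]
                      have := (hpow_pos (-(DeltaZ y' y'' : ℤ))).le
                      nlinarith
                · -- Δ1 > 0 hence Δ2 = 0
                  have h10 : y 0 = y' 0 :=
                    eq_of_numZ_lt (show numZ 0 < DeltaZ y y' by
                      simpa [numZ] using h1p)
                  have h2z : DeltaZ y' y'' = 0 := by
                    refine (DeltaZ_zero_iff h23).mpr fun he => hy0 ?_
                    rw [h10, he]
                  rw [h31 y y' k' h12 h1p]
                  by_cases hbb : DeltaZ y y' ≤ 2 * Tp
                  · have hm := mul_le_mul_of_nonneg_left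
                      (hmono (DeltaZ y y') (2*Tp) hbb) hε.le
                    have := hDbig y' y'' k' h23 h2z
                    have := (hD y y'' k' hy13).2
                    linarith
                  · push_neg at hbb
                    have hagree : ∀ i : ℤ, |i| < (Tp:ℤ) → y i = y' i := fun i hi =>
                      eq_of_numZ_lt (lt_of_le_of_lt (numZ_le_window hi) hbb)
                    have hde := hdep k' y y'' y' y'' hy13 h23 h3z h2z
                      hagree (fun i _ => rfl)
                    rw [hde]
                    have := (hpow_pos (-(DeltaZ y y' : ℤ))).le
                    nlinarith
              · -- Δ(y,y'') > 0, LHS small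
                rw [h31 y y'' k' hy13 h3p]
                rcases Nat.eq_zero_or_pos (DeltaZ y y') with h1z | h1p
                · have hd1 := hDbig y y' k' h12 h1z
                  have hd2 := hnn (y', k') (y'', k')
                  have hsm := mul_le_mul_of_nonneg_left (hmono 1 (DeltaZ y y'') h3p) hε.le
                  have h13 : εn * (3:ℝ) ^ (-((1:ℕ):ℤ)) = εn * (1/3) := by norm_num
                  rw [h13] at hsm
                  linarith
                · rcases Nat.eq_zero_or_pos (DeltaZ y' y'') with h2z | h2p
                  · have hd2 := hDbig y' y'' k' h23 h2z
                    have hd1 := hnn (y, k') (y', k')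
                    have hsm := mul_le_mul_of_nonneg_left (hmono 1 (DeltaZ y y'') h3p) hε.le
                    have h13 : εn * (3:ℝ) ^ (-((1:ℕ):ℤ)) = εn * (1/3) := by norm_num
                    rw [h13] at hsm
                    linarith
                  · rw [h31 y y' k' h12 h1p, h31 y' y'' k' h23 h2p]
                    have hmin := min_le_DeltaZ (y' := y') hy13
                    rcases min_le_iff.mp hmin with hle | hle
                    · have hm := mul_le_mul_of_nonneg_left
                        (hmono (DeltaZ y y') (DeltaZ y y'') hle) hε.le
                      have := (hpow_pos (-(DeltaZ y' y'' : ℤ))).le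
                      nlinarith
                    · have hm := mul_le_mul_of_nonneg_left
                        (hmono (DeltaZ y' y'') (DeltaZ y y'') hle) hε.le
                      have := (hpow_pos (-(DeltaZ y y' : ℤ))).le
                      nlinarith
        · rw [h1 y y' k k' (Ne.symm hk12), h1 y' y'' k' k hk12]
          have := (hD y y'' k hy13).2
          linarith
    · rw [h1 y y'' k k'' hk13]
      by_cases hk12 : k = k'
      · subst hk12
        have hk23 : k ≠ k'' := hk13
        rw [h1 y' y'' k k'' hk23]
        have := hnn (y, k) (y', k)
        linarith
      · rw [h1 y y' k k' hk12]
        have := hnn (y', k') (y'', k'')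
        linarith
end
end

section
/- With U, d as in the disjoint-union construction and F defined on U as a homeomorphism on each Pₙ fixing x*, for every δ with γ₀ ≥ δ > 0, setting n(δ) = max{n : γₙ ≥ δ}, the separation number satisfies sep(U, δ, d_T) = ξ + Σ_{m=0}^{n(δ)} sep(Pₘ, δ, d^m_T), where ξ = sep(U^{n(δ)}, δ, d_T) ∈ {1,2} and U^{n(δ)} = {x*} ∪ ⋃_{m>n(δ)} Pₘ. -/
noncomputable section

/-- The `T`-step dynamical metric `D_T(x,y) = max_{0 ≤ t < T} D(F^t x, F^t y)`. -/
def dynMet {X : Type*} (D : X → X → ℝ) (F : X → X) (T : ℕ) (x y : X) : ℝ :=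
  ⨆ t : Fin T, D (F^[(t : ℕ)] x) (F^[(t : ℕ)] y)

/-- The covering number: minimum size of a cover of `A` by sets of `d`-diameter `< ε`. -/
def covNum {X : Type*} (d : X → X → ℝ) (ε : ℝ) (A : Set X) : ℕ :=
  sInf {n | ∃ 𝒰 : Finset (Set X), (∀ x ∈ A, ∃ U ∈ 𝒰, x ∈ U) ∧
    (∀ U ∈ 𝒰, ∀ x ∈ U, ∀ y ∈ U, d x y < ε) ∧ 𝒰.card = n}

/-- The separation number: maximum size of an `ε`-separated subset of `A`. -/
def sepNum {X : Type*} (d : X → X → ℝ) (ε : ℝ) (A : Set X) : ℕ :=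
  sSup {n | ∃ S : Finset X, ↑S ⊆ A ∧ (∀ x ∈ S, ∀ y ∈ S, x ≠ y → ε ≤ d x y) ∧ S.card = n}

/-- The spanning number: minimum size of an `ε`-spanning subset of `A`. -/
def spanNum {X : Type*} (d : X → X → ℝ) (ε : ℝ) (A : Set X) : ℕ :=
  sInf {n | ∃ S : Finset X, ↑S ⊆ A ∧ (∀ x ∈ A, ∃ y ∈ S, d x y < ε) ∧ S.card = n}


/-- The metric on the one-point union `U = {x*} ∪ ⋃ₙ Pₙ` (with `x* = none`): the given
metric within each `Pₙ`; `2γₙ` between `x*` and `Pₙ`; `2γ_{min(n,m)}` between `Pₙ` and `Pₘ`. -/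
noncomputable def dU (P : ℕ → Type*) [∀ n, MetricSpace (P n)] (γ : ℕ → ℝ) :
    Option ((n : ℕ) × P n) → Option ((n : ℕ) × P n) → ℝ := fun a b =>
  match a, b with
  | none, none => 0
  | none, some q => 2 * γ q.1
  | some p, none => 2 * γ p.1
  | some p, some q => if h : p.1 = q.1 then dist (h ▸ p.2) q.2 else 2 * γ (min p.1 q.1)

section aux
variable {P : ℕ → Type*} [∀ n, MetricSpace (P n)] {γ : ℕ → ℝ}

lemma dU_same {n : ℕ} (x y : P n) : dU P γ (some ⟨n, x⟩) (some ⟨n, y⟩) = dist x y := by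
  simp [dU]

lemma dU_ne {n m : ℕ} (h : n ≠ m) (x : P n) (y : P m) :
    dU P γ (some ⟨n, x⟩) (some ⟨m, y⟩) = 2 * γ (min n m) := by
  simp [dU, h]

end aux

section aux2
set_option linter.unusedSectionVars false
variable {P : ℕ → Type*} [∀ n, MetricSpace (P n)] {γ : ℕ → ℝ}
variable {G : ∀ n, P n → P n} {F : Option ((n : ℕ) × P n) → Option ((n : ℕ) × P n)}
variable (hFnone : F none = none)
    (hFsome : ∀ (n : ℕ) (x : P n), F (some ⟨n, x⟩) = some ⟨n, G n x⟩)

omit [∀ n, MetricSpace (P n)] in include hFnone in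
lemma Fit_none (t : ℕ) : F^[t] none = none := by
  induction t with
  | zero => rfl
  | succ k ih => rw [Function.iterate_succ_apply', ih, hFnone]

include hFsome in
lemma Fit_some (t : ℕ) (n : ℕ) (x : P n) : F^[t] (some ⟨n, x⟩) = some ⟨n, (G n)^[t] x⟩ := by
  induction t with
  | zero => rfl
  | succ k ih => rw [Function.iterate_succ_apply', ih, hFsome, Function.iterate_succ_apply']

include hFsome in
lemma DT_same {T : ℕ} (n : ℕ) (x y : P n) :
    dynMet (dU P γ) F T (some ⟨n, x⟩) (some ⟨n, y⟩) = dynMet dist (G n) T x y := by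
  unfold dynMet
  refine iSup_congr fun t => ?_
  rw [Fit_some hFsome, Fit_some hFsome, dU_same]

include hFsome in
lemma DT_ne {T : ℕ} (hT : 1 ≤ T) {n m : ℕ} (h : n ≠ m) (x : P n) (y : P m) :
    dynMet (dU P γ) F T (some ⟨n, x⟩) (some ⟨m, y⟩) = 2 * γ (min n m) := by
  have : Nonempty (Fin T) := ⟨⟨0, hT⟩⟩
  unfold dynMet
  have : ∀ t : Fin T, dU P γ (F^[(t:ℕ)] (some ⟨n, x⟩)) (F^[(t:ℕ)] (some ⟨m, y⟩))
      = 2 * γ (min n m) := fun t => by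
    rw [Fit_some hFsome, Fit_some hFsome, dU_ne h]
  simp only [this, ciSup_const]

include hFnone hFsome in
lemma DT_none_some {T : ℕ} (hT : 1 ≤ T) (n : ℕ) (x : P n) :
    dynMet (dU P γ) F T none (some ⟨n, x⟩) = 2 * γ n := by
  have : Nonempty (Fin T) := ⟨⟨0, hT⟩⟩
  unfold dynMet
  have : ∀ t : Fin T, dU P γ (F^[(t:ℕ)] none) (F^[(t:ℕ)] (some ⟨n, x⟩)) = 2 * γ n := fun t => by
    rw [Fit_some hFsome, Fit_none hFnone]; rfl
  simp only [this, ciSup_const]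

include hFnone hFsome in
lemma DT_some_none {T : ℕ} (hT : 1 ≤ T) (n : ℕ) (x : P n) :
    dynMet (dU P γ) F T (some ⟨n, x⟩) none = 2 * γ n := by
  have : Nonempty (Fin T) := ⟨⟨0, hT⟩⟩
  unfold dynMet
  have : ∀ t : Fin T, dU P γ (F^[(t:ℕ)] (some ⟨n, x⟩)) (F^[(t:ℕ)] none) = 2 * γ n := fun t => by
    rw [Fit_some hFsome, Fit_none hFnone]; rfl
  simp only [this, ciSup_const]

include hFnone in
lemma DT_none_none {T : ℕ} : dynMet (dU P γ) F T none none = 0 := by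
  unfold dynMet
  rcases Nat.eq_zero_or_pos T with h | h
  · subst h; exact Real.iSup_of_isEmpty _
  · have : Nonempty (Fin T) := ⟨⟨0, h⟩⟩
    have : ∀ t : Fin T, dU P γ (F^[(t:ℕ)] none) (F^[(t:ℕ)] none) = 0 := fun t => by
      rw [Fit_none hFnone]; rfl
    simp only [this, ciSup_const]

lemma dynMet_le {X : Type*} (D : X → X → ℝ) (F : X → X) {T : ℕ} (hT : 1 ≤ T) {x y : X} {c : ℝ}
    (h : ∀ t, t < T → D (F^[t] x) (F^[t] y) ≤ c) : dynMet D F T x y ≤ c := by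
  have : Nonempty (Fin T) := ⟨⟨0, hT⟩⟩
  exact ciSup_le fun t => h t t.2

end aux2

lemma zero_mem_sepSet {X : Type*} (d : X → X → ℝ) (ε : ℝ) (A : Set X) :
    0 ∈ {n | ∃ S : Finset X, ↑S ⊆ A ∧ (∀ x ∈ S, ∀ y ∈ S, x ≠ y → ε ≤ d x y) ∧ S.card = n} :=
  ⟨∅, by simp⟩

lemma sep_bdd {X : Type*} [MetricSpace X] [CompactSpace X] (G : X → X) (hG : Continuous G)
    {T : ℕ} (hT : 1 ≤ T) {δ : ℝ} (hδ : 0 < δ) :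
    BddAbove {n | ∃ S : Finset X, ↑S ⊆ (Set.univ : Set X) ∧
      (∀ x ∈ S, ∀ y ∈ S, x ≠ y → δ ≤ dynMet dist G T x y) ∧ S.card = n} := by
  classical
  have : Nonempty (Fin T) := ⟨⟨0, hT⟩⟩
  have h : ∀ t : Fin T, ∃ e, 0 < e ∧
      ∀ x y : X, dist x y < e → dist (G^[(t:ℕ)] x) (G^[(t:ℕ)] y) < δ := by
    intro t
    have hc : Continuous (G^[(t:ℕ)]) := hG.iterate _
    have hu := CompactSpace.uniformContinuous_of_continuous hc
    rcases Metric.uniformContinuous_iff.1 hu δ hδ with ⟨e, he, hi⟩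
    exact ⟨e, he, fun x y hxy => hi hxy⟩
  choose e he himp using h
  set η : ℝ := Finset.univ.inf' (Finset.univ_nonempty) e with hη
  have hηpos : 0 < η := by
    rw [hη, Finset.lt_inf'_iff]
    exact fun t _ => he t
  have hηle : ∀ t : Fin T, η ≤ e t := fun t => Finset.inf'_le _ (Finset.mem_univ t)
  -- δ-separated for dynMet implies η-separated for dist
  have key : ∀ x y : X, δ ≤ dynMet dist G T x y → η ≤ dist x y := by
    intro x y hxy
    by_contra hlt
    push_neg at hlt
    obtain ⟨t, ht⟩ := Finite.exists_max (fun t : Fin T => dist (G^[(t:ℕ)] x) (G^[(t:ℕ)] y))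
    have : dynMet dist G T x y ≤ dist (G^[(t:ℕ)] x) (G^[(t:ℕ)] y) := ciSup_le ht
    have hlt2 : dist (G^[(t:ℕ)] x) (G^[(t:ℕ)] y) < δ :=
      himp t x y (lt_of_lt_of_le hlt (hηle t))
    linarith
  obtain ⟨C, _, Cfin, hcov⟩ :=
    finite_cover_balls_of_compact (isCompact_univ (X := X)) (half_pos hηpos)
  have hc : ∀ x : X, ∃ c, c ∈ C ∧ x ∈ Metric.ball c (η/2) := by
    intro x
    have := hcov (Set.mem_univ x)
    simpa using this
  choose c hcC hcball using hc
  refine ⟨Cfin.toFinset.card, ?_⟩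
  rintro k ⟨S, -, hsep, rfl⟩
  refine Finset.card_le_card_of_injOn c (fun a _ => Cfin.mem_toFinset.2 (hcC a)) ?_
  intro x hx y hy hcxy
  by_contra hne
  have h1 := key x y (hsep x (by simpa using hx) y (by simpa using hy) hne)
  have d1 := hcball x
  have d2 := hcball y
  rw [Metric.mem_ball] at d1 d2
  have : dist x y < η := by
    calc dist x y ≤ dist x (c x) + dist (c y) y := by
          rw [hcxy]; exact dist_triangle _ _ _
      _ < η/2 + η/2 := by rw [dist_comm (c y) y]; exact add_lt_add d1 d2
      _ = η := by ring
  linarith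


/-- Decomposition of the separation number of the one-point union: for `0 < δ ≤ γ₀` with
`n(δ) = N` (i.e. `δ ≤ γ_N` and `γ_{N+1} < δ`),
`sep(U, δ, d_T) = ξ + Σ_{m=0}^{N} sep(Pₘ, δ, dᵐ_T)` where
`ξ = sep(U^N, δ, d_T) ∈ {1,2}` and `U^N = {x*} ∪ ⋃_{m>N} Pₘ`. -/
theorem stmt16 (P : ℕ → Type*) [∀ n, MetricSpace (P n)] [∀ n, CompactSpace (P n)]
    (γ : ℕ → ℝ) (hγpos : ∀ n, 0 < γ n) (hγ1 : ∀ n, γ n ≤ 1)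
    (hdec : ∀ n, 2 * γ (n + 1) < γ n)
    (hdiam : ∀ (n : ℕ) (x y : P n), dist x y ≤ γ n)
    (G : ∀ n, P n → P n)
    (hG : ∀ n, Continuous (G n) ∧ Function.Bijective (G n))
    (F : Option ((n : ℕ) × P n) → Option ((n : ℕ) × P n))
    (hFnone : F none = none)
    (hFsome : ∀ (n : ℕ) (x : P n), F (some ⟨n, x⟩) = some ⟨n, G n x⟩)
    (δ : ℝ) (hδpos : 0 < δ) (hδ0 : δ ≤ γ 0)
    (N : ℕ) (hN1 : δ ≤ γ N) (hN2 : γ (N + 1) < δ)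
    (T : ℕ) (hT : 1 ≤ T) :
    (sepNum (dynMet (dU P γ) F T) δ
        {u | u = none ∨ ∃ n, N < n ∧ ∃ x : P n, u = some ⟨n, x⟩} = 1 ∨
     sepNum (dynMet (dU P γ) F T) δ
        {u | u = none ∨ ∃ n, N < n ∧ ∃ x : P n, u = some ⟨n, x⟩} = 2) ∧
    sepNum (dynMet (dU P γ) F T) δ Set.univ
      = sepNum (dynMet (dU P γ) F T) δ
          {u | u = none ∨ ∃ n, N < n ∧ ∃ x : P n, u = some ⟨n, x⟩}
        + ∑ m ∈ Finset.range (N + 1), sepNum (dynMet dist (G m) T) δ Set.univ := by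
  classical
  have _inst : Nonempty (Fin T) := ⟨⟨0, hT⟩⟩
  set A : Set (Option ((n : ℕ) × P n)) :=
    {u | u = none ∨ ∃ n, N < n ∧ ∃ x : P n, u = some ⟨n, x⟩} with hAdef
  have hγ0 : ∀ n, 0 ≤ γ n := fun n => (hγpos n).le
  have hanti : Antitone γ := antitone_nat_of_succ_le fun n => by linarith [hγpos (n+1), hdec n]
  have hδ2 : ∀ m, m ≤ N → δ ≤ 2 * γ m := fun m hm => by
    have := hanti hm; linarith [hγ0 m, hN1]
  have hsmall : ∀ n, N + 2 ≤ n → 2 * γ n < δ := fun n hn => by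
    have h1 : γ n ≤ γ (N+2) := hanti hn
    have := hdec (N+1); linarith
  -- distance computations
  have dt_same : ∀ (n : ℕ) (x y : P n), (dynMet (dU P γ) F T) (some ⟨n, x⟩) (some ⟨n, y⟩) = dynMet dist (G n) T x y :=
    fun n x y => DT_same hFsome n x y
  have dt_ne : ∀ {n m : ℕ}, n ≠ m → ∀ (x : P n) (y : P m),
      (dynMet (dU P γ) F T) (some ⟨n, x⟩) (some ⟨m, y⟩) = 2 * γ (min n m) :=
    fun h x y => DT_ne hFsome hT h x y
  have dt_ns : ∀ (n : ℕ) (x : P n), (dynMet (dU P γ) F T) none (some ⟨n, x⟩) = 2 * γ n :=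
    fun n x => DT_none_some hFnone hFsome hT n x
  have dt_sn : ∀ (n : ℕ) (x : P n), (dynMet (dU P γ) F T) (some ⟨n, x⟩) none = 2 * γ n :=
    fun n x => DT_some_none hFnone hFsome hT n x
  have dyn_le : ∀ (n : ℕ) (x y : P n), dynMet dist (G n) T x y ≤ γ n :=
    fun n x y => dynMet_le dist (G n) hT (fun t _ => hdiam n _ _)
  -- the separated-set collections
  set SA : Set ℕ := {n | ∃ S : Finset (Option ((n : ℕ) × P n)), ↑S ⊆ A ∧
    (∀ x ∈ S, ∀ y ∈ S, x ≠ y → δ ≤ (dynMet (dU P γ) F T) x y) ∧ S.card = n} with hSAdef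
  set SU : Set ℕ := {n | ∃ S : Finset (Option ((n : ℕ) × P n)), ↑S ⊆ (Set.univ : Set (Option ((n : ℕ) × P n))) ∧
    (∀ x ∈ S, ∀ y ∈ S, x ≠ y → δ ≤ (dynMet (dU P γ) F T) x y) ∧ S.card = n} with hSUdef
  set SP : ℕ → Set ℕ := fun m => {n | ∃ S : Finset (P m), ↑S ⊆ (Set.univ : Set (P m)) ∧
    (∀ x ∈ S, ∀ y ∈ S, x ≠ y → δ ≤ dynMet dist (G m) T x y) ∧ S.card = n} with hSPdef
  have hsepA : sepNum (dynMet (dU P γ) F T) δ A = sSup SA := rfl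
  have hsepU : sepNum (dynMet (dU P γ) F T) δ Set.univ = sSup SU := rfl
  have hsepP : ∀ m, sepNum (dynMet dist (G m) T) δ Set.univ = sSup (SP m) := fun m => rfl
  have hSPbdd : ∀ m, BddAbove (SP m) := fun m => sep_bdd (G m) (hG m).1 hT hδpos
  have hSPmem : ∀ m, sSup (SP m) ∈ SP m := fun m =>
    Nat.sSup_mem ⟨0, zero_mem_sepSet _ _ _⟩ (hSPbdd m)
  -- 1 ∈ SA
  have h1SA : 1 ∈ SA := by
    refine ⟨{none}, ?_, ?_, rfl⟩
    · intro u hu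
      simp only [Finset.coe_singleton, Set.mem_singleton_iff] at hu
      subst hu
      exact Or.inl rfl
    · intro x hx y hy hxy
      simp only [Finset.mem_singleton] at hx hy
      exact absurd (hx.trans hy.symm) hxy
  -- every element of SA is ≤ 2
  have h2SA : ∀ k ∈ SA, k ≤ 2 := by
    rintro k ⟨S, hsub, hsep, rfl⟩
    by_contra hk
    push_neg at hk
    have hcard : (Finset.univ : Finset Bool).card < S.card := by simpa using hk
    obtain ⟨u, hu, v, hv, huv, hguv⟩ :=
      Finset.exists_ne_map_eq_of_card_lt_of_maps_to hcard
        (f := fun u => decide (∃ x : P (N+1), u = some ⟨N+1, x⟩))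
        (t := Finset.univ) (fun a _ => Finset.mem_univ _)
    have hlow := hsep u hu v hv huv
    have hAu := hsub hu
    have hAv := hsub hv
    have hfin : (dynMet (dU P γ) F T) u v < δ := by
      by_cases hcase : ∃ x : P (N+1), u = some ⟨N+1, x⟩
      · obtain ⟨x, rfl⟩ := hcase
        have hcv : ∃ y : P (N+1), v = some ⟨N+1, y⟩ := by
          by_contra hno
          simp only [decide_eq_decide] at hguv
          exact hno (hguv.mp ⟨x, rfl⟩)
        obtain ⟨y, rfl⟩ := hcv
        rw [dt_same]
        exact lt_of_le_of_lt (dyn_le _ _ _) hN2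
      · have hcv : ¬ ∃ y : P (N+1), v = some ⟨N+1, y⟩ := by
          intro hyes
          simp only [decide_eq_decide] at hguv
          exact hcase (hguv.mpr hyes)
        have hform : ∀ w : Option ((n : ℕ) × P n), w ∈ A → (¬ ∃ x : P (N+1), w = some ⟨N+1, x⟩) →
            w = none ∨ ∃ n, N + 2 ≤ n ∧ ∃ x : P n, w = some ⟨n, x⟩ := by
          rintro w hw hnw
          rcases hw with h | ⟨n, hn, x, rfl⟩
          · exact Or.inl h
          · refine Or.inr ⟨n, ?_, x, rfl⟩
            rcases Nat.lt_or_ge n (N+2) with h2 | h2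
            · have hn1 : n = N + 1 := by omega
              subst hn1
              exact absurd ⟨x, rfl⟩ hnw
            · exact h2
        rcases hform u hAu hcase with rfl | ⟨n, hn, x, rfl⟩
        · rcases hform v hAv hcv with rfl | ⟨n, hn, y, rfl⟩
          · exact absurd rfl huv
          · rw [dt_ns]
            exact hsmall n hn
        · rcases hform v hAv hcv with rfl | ⟨m, hm, y, rfl⟩
          · rw [dt_sn]
            exact hsmall n hn
          · by_cases hnm : n = m
            · subst hnm
              rw [dt_same]
              have h1 : γ n ≤ γ (N+2) := hanti hn
              have h2 := hsmall (N+2) le_rfl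
              have h3 := dyn_le n x y
              linarith [hγ0 n]
            · rw [dt_ne hnm]
              exact hsmall _ (le_min hn hm)
    linarith
  have hSAbdd : BddAbove SA := ⟨2, fun k hk => h2SA k hk⟩
  have hSAmem : sSup SA ∈ SA := Nat.sSup_mem ⟨1, h1SA⟩ hSAbdd
  have hξ1 : 1 ≤ sSup SA := le_csSup hSAbdd h1SA
  have hξ2 : sSup SA ≤ 2 := csSup_le ⟨1, h1SA⟩ h2SA
  -- upper bound for SU
  have hub : ∀ k ∈ SU, k ≤ sSup SA + ∑ m ∈ Finset.range (N+1), sSup (SP m) := by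
    rintro k ⟨S, -, hsep, rfl⟩
    set f : Option ((n : ℕ) × P n) → ℕ := fun u => Option.elim u (N+1) (fun p => min p.1 (N+1)) with hf
    have hmaps : ∀ u ∈ S, f u ∈ Finset.range (N+2) := by
      intro u _
      rcases u with _ | p
      · simp [f]
      · simp only [f, Option.elim, Finset.mem_range]
        omega
    rw [Finset.card_eq_sum_card_fiberwise hmaps, Finset.sum_range_succ]
    have htail : (S.filter fun u => f u = N+1).card ≤ sSup SA := by
      refine le_csSup hSAbdd ⟨S.filter fun u => f u = N+1, ?_, ?_, rfl⟩
      · intro u hu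
        simp only [Finset.coe_filter, Set.mem_setOf_eq] at hu
        obtain ⟨hus, hfu⟩ := hu
        rcases u with _ | ⟨n, x⟩
        · exact Or.inl rfl
        · refine Or.inr ⟨n, ?_, x, rfl⟩
          simp only [f, Option.elim] at hfu
          omega
      · intro x hx y hy
        exact hsep x (Finset.mem_filter.1 hx).1 y (Finset.mem_filter.1 hy).1
    have hpiece : ∀ m ∈ Finset.range (N+1),
        (S.filter fun u => f u = m).card ≤ sSup (SP m) := by
      intro m hm
      rw [Finset.mem_range] at hm
      set Sm := S.filter fun u => f u = m with hSm
      have hshape : ∀ u ∈ Sm, ∃ x : P m, u = some ⟨m, x⟩ := by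
        intro u hu
        obtain ⟨hus, hfu⟩ := Finset.mem_filter.1 hu
        rcases u with _ | ⟨n, x⟩
        · simp only [f, Option.elim] at hfu
          omega
        · simp only [f, Option.elim] at hfu
          have hnm : n = m := by omega
          subst hnm
          exact ⟨x, rfl⟩
      have hιinj : Function.Injective (fun x : P m => (some ⟨m, x⟩ : Option ((n : ℕ) × P n))) := by
        intro x y h
        simpa using h
      have hcardt : (Sm.preimage (fun x : P m => (some ⟨m, x⟩ : Option ((n : ℕ) × P n))) hιinj.injOn).card
          = Sm.card := by
        rw [Finset.card_preimage, Finset.filter_true_of_mem]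
        intro u hu
        obtain ⟨x, rfl⟩ := hshape u hu
        exact ⟨x, rfl⟩
      rw [← hcardt]
      refine le_csSup (hSPbdd m) ⟨_, Set.subset_univ _, ?_, rfl⟩
      intro x hx y hy hxy
      have hxS : (some ⟨m, x⟩ : Option ((n : ℕ) × P n)) ∈ S := (Finset.mem_filter.1 (Finset.mem_preimage.1 hx)).1
      have hyS : (some ⟨m, y⟩ : Option ((n : ℕ) × P n)) ∈ S := (Finset.mem_filter.1 (Finset.mem_preimage.1 hy)).1
      have hd := hsep _ hxS _ hyS (by simpa using hxy)
      rwa [dt_same] at hd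
    have hsum := Finset.sum_le_sum hpiece
    omega
  have hSUbdd : BddAbove SU :=
    ⟨sSup SA + ∑ m ∈ Finset.range (N+1), sSup (SP m), fun k hk => hub k hk⟩
  have h0SU : (0 : ℕ) ∈ SU := ⟨∅, by simp⟩
  have hle : sSup SU ≤ sSup SA + ∑ m ∈ Finset.range (N+1), sSup (SP m) :=
    csSup_le ⟨0, h0SU⟩ hub
  -- lower bound: construct a separated set realizing the sum
  obtain ⟨Sξ, hSξA, hSξsep, hSξcard⟩ := hSAmem
  have hSSm : ∀ m, ∃ S : Finset (P m),
      (∀ x ∈ S, ∀ y ∈ S, x ≠ y → δ ≤ dynMet dist (G m) T x y) ∧ S.card = sSup (SP m) := by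
    intro m
    obtain ⟨S, -, hs, hc⟩ := hSPmem m
    exact ⟨S, hs, hc⟩
  choose SS hSSsep hSScard using hSSm
  have hιinj : ∀ m, Function.Injective (fun x : P m => (some ⟨m, x⟩ : Option ((n : ℕ) × P n))) := by
    intro m x y h
    simpa using h
  set Stot : Finset (Option ((n : ℕ) × P n)) :=
    Sξ ∪ (Finset.range (N+1)).biUnion
      (fun m => (SS m).image (fun x : P m => (some ⟨m, x⟩ : Option ((n : ℕ) × P n)))) with hStot
  have hdisj : Disjoint Sξ ((Finset.range (N+1)).biUnion
      (fun m => (SS m).image (fun x : P m => (some ⟨m, x⟩ : Option ((n : ℕ) × P n))))) := by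
    rw [Finset.disjoint_left]
    intro u hu hub2
    obtain ⟨m, hm, hui⟩ := Finset.mem_biUnion.1 hub2
    obtain ⟨x, -, rfl⟩ := Finset.mem_image.1 hui
    rw [Finset.mem_range] at hm
    rcases hSξA hu with h | ⟨n, hn, y, hy⟩
    · exact Option.some_ne_none _ h
    · rw [Option.some.injEq, Sigma.mk.inj_iff] at hy
      obtain ⟨h1, -⟩ := hy
      omega
  have hbidisj : ∀ m1 ∈ Finset.range (N+1), ∀ m2 ∈ Finset.range (N+1), m1 ≠ m2 →
      Disjoint ((SS m1).image (fun x : P m1 => (some ⟨m1, x⟩ : Option ((n : ℕ) × P n))))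
        ((SS m2).image (fun x : P m2 => (some ⟨m2, x⟩ : Option ((n : ℕ) × P n)))) := by
    intro m1 _ m2 _ hne
    rw [Finset.disjoint_left]
    rintro u hu1 hu2
    obtain ⟨x, -, rfl⟩ := Finset.mem_image.1 hu1
    obtain ⟨y, -, hxy⟩ := Finset.mem_image.1 hu2
    rw [Option.some.injEq, Sigma.mk.inj_iff] at hxy
    exact hne hxy.1.symm
  have hcardtot : Stot.card = sSup SA + ∑ m ∈ Finset.range (N+1), sSup (SP m) := by
    rw [hStot, Finset.card_union_of_disjoint hdisj, Finset.card_biUnion hbidisj, hSξcard]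
    congr 1
    refine Finset.sum_congr rfl fun m _ => ?_
    rw [Finset.card_image_of_injective _ (hιinj m), hSScard]
  have hmemtot : ∀ u ∈ Stot, u ∈ Sξ ∨ ∃ m, m ≤ N ∧ ∃ x ∈ SS m, u = some ⟨m, x⟩ := by
    intro u hu
    rcases Finset.mem_union.1 hu with h | h
    · exact Or.inl h
    · obtain ⟨m, hm, hui⟩ := Finset.mem_biUnion.1 h
      obtain ⟨x, hx, rfl⟩ := Finset.mem_image.1 hui
      rw [Finset.mem_range] at hm
      exact Or.inr ⟨m, by omega, x, hx, rfl⟩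
  have hmix : ∀ m, m ≤ N → ∀ (x : P m), ∀ u ∈ A,
      δ ≤ (dynMet (dU P γ) F T) u (some ⟨m, x⟩) ∧ δ ≤ (dynMet (dU P γ) F T) (some ⟨m, x⟩) u := by
    intro m hm x u hu
    rcases hu with rfl | ⟨n, hn, y, rfl⟩
    · exact ⟨by rw [dt_ns]; exact hδ2 m hm, by rw [dt_sn]; exact hδ2 m hm⟩
    · have hnm : n ≠ m := by omega
      constructor
      · rw [dt_ne hnm]
        have hmin : min n m = m := min_eq_right (by omega)
        rw [hmin]
        exact hδ2 m hm
      · rw [dt_ne hnm.symm]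
        have hmin : min m n = m := min_eq_left (by omega)
        rw [hmin]
        exact hδ2 m hm
  have hseptot : ∀ u ∈ Stot, ∀ v ∈ Stot, u ≠ v → δ ≤ (dynMet (dU P γ) F T) u v := by
    intro u hu v hv huv
    rcases hmemtot u hu with hu' | ⟨m, hm, x, hxS, rfl⟩
    · rcases hmemtot v hv with hv' | ⟨m, hm, y, hyS, rfl⟩
      · exact hSξsep u hu' v hv' huv
      · exact (hmix m hm y u (hSξA hu')).1
    · rcases hmemtot v hv with hv' | ⟨m', hm', y, hyS, rfl⟩
      · exact (hmix m hm x v (hSξA hv')).2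
      · by_cases hmm : m = m'
        · subst hmm
          have hxy : x ≠ y := fun h => huv (by rw [h])
          rw [dt_same]
          exact hSSsep m x hxS y hyS hxy
        · rw [dt_ne hmm]
          exact hδ2 _ (le_trans (min_le_left m m') hm)
  have hge : sSup SA + ∑ m ∈ Finset.range (N+1), sSup (SP m) ≤ sSup SU :=
    le_csSup hSUbdd ⟨Stot, Set.subset_univ _, hseptot, hcardtot⟩
  refine ⟨?_, ?_⟩
  · rw [hsepA]
    omega
  · rw [hsepU, hsepA]
    have : ∑ m ∈ Finset.range (N + 1), sepNum (dynMet dist (G m) T) δ Set.univ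
        = ∑ m ∈ Finset.range (N + 1), sSup (SP m) :=
      Finset.sum_congr rfl fun m _ => hsepP m
    rw [this]
    omega
end
end

section
/- (Gluing of conjugate systems.) Let (X⁻, D, F) and (Y, d, G) be compact systems with X⁻ ∩ Y = ∅, f: X⁻ → Y a conjugacy (homeomorphism with f∘F = G∘f) satisfying D(x,x') ≤ d(f(x), f(x')) for all x,x' ∈ X⁻, and let α satisfy diam(Y,d) > α > 0.5·max{diam(X⁻,D), diam(Y,d)}. Define ρ on X⁻ ∪ Y by: ρ = D on X⁻×X⁻, ρ = d on Y×Y, and ρ(x,y) = ρ(y,x) = max{α, D(x, f⁻¹(y))} for x ∈ X⁻, y ∈ Y. Then ρ is a metric, (X⁻ ∪ Y, ρ) is compact with diameter diam(Y,d), and H = F ∪ G is a homeomorphism with respect to ρ. -/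
noncomputable section

/-- The glued metric `ρ` on `X ⊕ Y`: `ρ = D` on `X`, `ρ = d` on `Y`, and
`ρ(x, y) = max(α, D(x, f⁻¹(y)))` between the two pieces. -/
noncomputable def rho {X Y : Type*} [MetricSpace X] [MetricSpace Y]
    (f : X ≃ₜ Y) (α : ℝ) : X ⊕ Y → X ⊕ Y → ℝ := fun a b =>
  match a, b with
  | Sum.inl x, Sum.inl x' => dist x x'
  | Sum.inr y, Sum.inr y' => dist y y'
  | Sum.inl x, Sum.inr y => max α (dist x (f.symm y))
  | Sum.inr y, Sum.inl x => max α (dist x (f.symm y))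

/-- Gluing of conjugate systems: if `f : X⁻ → Y` is a conjugacy of the compact systems
`(X⁻, D, F)`, `(Y, d, G)` with `D(x,x') ≤ d(f(x), f(x'))`, and
`diam(Y) > α > ½·max(diam X⁻, diam Y)`, then `ρ` is a metric on `X⁻ ∪ Y`, the union is
compact with `ρ`-diameter `diam(Y, d)`, and `H = F ∪ G` is a homeomorphism wrt `ρ`. -/
theorem stmt17 {X Y : Type*} [MetricSpace X] [CompactSpace X] [Nonempty X]
    [MetricSpace Y] [CompactSpace Y]
    (F : X ≃ₜ X) (G : Y ≃ₜ Y) (f : X ≃ₜ Y)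
    (hconj : ∀ x, f (F x) = G (f x))
    (hexp : ∀ x x' : X, dist x x' ≤ dist (f x) (f x'))
    (α : ℝ)
    (hα1 : α < Metric.diam (Set.univ : Set Y))
    (hα2 : (1 / 2) * max (Metric.diam (Set.univ : Set X))
        (Metric.diam (Set.univ : Set Y)) < α)
    (H : X ⊕ Y → X ⊕ Y) (hH : H = Sum.map F G) :
    (∀ a b, rho f α a b = 0 ↔ a = b) ∧
    (∀ a b, rho f α a b = rho f α b a) ∧
    (∀ a b c, rho f α a c ≤ rho f α a b + rho f α b c) ∧
    (∀ u : ℕ → X ⊕ Y, ∃ z : X ⊕ Y, ∃ φ : ℕ → ℕ, StrictMono φ ∧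
      Filter.Tendsto (fun j => rho f α (u (φ j)) z) Filter.atTop (nhds 0)) ∧
    (∀ a b, rho f α a b ≤ Metric.diam (Set.univ : Set Y)) ∧
    (∃ a b, rho f α a b = Metric.diam (Set.univ : Set Y)) ∧
    Function.Bijective H ∧
    (∀ a : X ⊕ Y, ∀ γ : ℝ, 0 < γ → ∃ η > (0 : ℝ), ∀ b,
      rho f α a b < η → rho f α (H a) (H b) < γ) ∧
    (∀ a : X ⊕ Y, ∀ γ : ℝ, 0 < γ → ∃ η > (0 : ℝ), ∀ b,
      rho f α (H a) (H b) < η → rho f α a b < γ) := by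
  subst hH
  have hα0 : 0 < α := by
    have h1 : (0:ℝ) ≤ Metric.diam (Set.univ : Set X) := Metric.diam_nonneg
    have h2 := le_max_left (Metric.diam (Set.univ : Set X)) (Metric.diam (Set.univ : Set Y))
    linarith
  have hdX : Metric.diam (Set.univ : Set X) < 2 * α := by
    have := le_max_left (Metric.diam (Set.univ : Set X)) (Metric.diam (Set.univ : Set Y))
    linarith
  have hdY : Metric.diam (Set.univ : Set Y) < 2 * α := by
    have := le_max_right (Metric.diam (Set.univ : Set X)) (Metric.diam (Set.univ : Set Y))
    linarith
  have hDle : ∀ (x : X) (y : Y), dist x (f.symm y) ≤ dist (f x) y := by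
    intro x y
    have := hexp x (f.symm y)
    simpa using this
  have hdistX : ∀ x x' : X, dist x x' ≤ Metric.diam (Set.univ : Set X) := fun x x' =>
    Metric.dist_le_diam_of_mem isCompact_univ.isBounded (Set.mem_univ x) (Set.mem_univ x')
  have hdistY : ∀ y y' : Y, dist y y' ≤ Metric.diam (Set.univ : Set Y) := fun y y' =>
    Metric.dist_le_diam_of_mem isCompact_univ.isBounded (Set.mem_univ y) (Set.mem_univ y')
  have hsymmexp : ∀ y y' : Y, dist (f.symm y) (f.symm y') ≤ dist y y' := by
    intro y y'
    have := hexp (f.symm y) (f.symm y')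
    simpa using this
  refine ⟨?_, ?_, ?_, ?_, ?_, ?_, ?_, ?_, ?_⟩
  · -- rho = 0 ↔ eq
    rintro (x | y) (x' | y') <;> simp only [rho]
    · simp [dist_eq_zero]
    · constructor
      · intro h
        exfalso
        have := le_max_left α (dist x (f.symm y'))
        rw [h] at this; linarith
      · intro h; exact absurd h (by simp)
    · constructor
      · intro h
        exfalso
        have := le_max_left α (dist x' (f.symm y))
        rw [h] at this; linarith
      · intro h; exact absurd h (by simp)
    · simp [dist_eq_zero]
  · -- symmetry
    rintro (x | y) (x' | y') <;> simp only [rho] <;> rw [dist_comm]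
  · -- triangle
    rintro (x | y) (x' | y') (x'' | y'') <;> simp only [rho]
    · exact dist_triangle _ _ _
    · -- l l r
      refine max_le ?_ ?_
      · have := le_max_left α (dist x' (f.symm y''))
        have := dist_nonneg (x := x) (y := x'); linarith
      · calc dist x (f.symm y'') ≤ dist x x' + dist x' (f.symm y'') := dist_triangle _ _ _
          _ ≤ dist x x' + max α (dist x' (f.symm y'')) := by
              have := le_max_right α (dist x' (f.symm y'')); linarith
    · -- l r l
      have h1 := le_max_left α (dist x (f.symm y'))
      have h2 := le_max_left α (dist x'' (f.symm y'))
      have h3 := hdistX x x''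
      linarith
    · -- l r r
      refine max_le ?_ ?_
      · have := le_max_left α (dist x (f.symm y'))
        have := dist_nonneg (x := y') (y := y''); linarith
      · calc dist x (f.symm y'') ≤ dist x (f.symm y') + dist (f.symm y') (f.symm y'') :=
              dist_triangle _ _ _
          _ ≤ max α (dist x (f.symm y')) + dist y' y'' :=
              add_le_add (le_max_right _ _) (hsymmexp y' y'')
    · -- r l l
      refine max_le ?_ ?_
      · have := le_max_left α (dist x' (f.symm y))
        have := dist_nonneg (x := x') (y := x''); linarith
      · calc dist x'' (f.symm y) ≤ dist x'' x' + dist x' (f.symm y) := dist_triangle _ _ _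
          _ ≤ max α (dist x' (f.symm y)) + dist x' x'' := by
              rw [dist_comm x'' x']
              have := le_max_right α (dist x' (f.symm y)); linarith
    · -- r l r
      have h1 := le_max_left α (dist x' (f.symm y))
      have h2 := le_max_left α (dist x' (f.symm y''))
      have h3 := hdistY y y''
      linarith
    · -- r r l
      have h0 := le_max_left α (dist x'' (f.symm y'))
      have h4 := dist_nonneg (x := y) (y := y')
      have h5 : dist x'' (f.symm y) ≤ max α (dist x'' (f.symm y')) + dist y y' := by
        have h1 : dist x'' (f.symm y) ≤ dist x'' (f.symm y') + dist (f.symm y') (f.symm y) :=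
          dist_triangle _ _ _
        have h2 := hsymmexp y' y
        have h3 := le_max_right α (dist x'' (f.symm y'))
        rw [dist_comm y y']
        linarith
      exact max_le (by linarith) (by linarith)
    · exact dist_triangle _ _ _
  · -- sequential compactness
    intro u
    by_cases hl : ∃ᶠ n in Filter.atTop, ∃ x, u n = Sum.inl x
    · obtain ⟨φ₁, hφ₁mono, hφ₁⟩ := Filter.extraction_of_frequently_atTop hl
      choose v hv using hφ₁
      obtain ⟨z, φ₂, hφ₂, hz⟩ := CompactSpace.tendsto_subseq v
      refine ⟨Sum.inl z, φ₁ ∘ φ₂, hφ₁mono.comp hφ₂, ?_⟩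
      have hconv := tendsto_iff_dist_tendsto_zero.mp hz
      refine hconv.congr fun j => ?_
      simp only [Function.comp_apply]
      rw [hv (φ₂ j)]
      rfl
    · have hr : ∃ᶠ n in Filter.atTop, ∃ y, u n = Sum.inr y := by
        refine (Filter.not_frequently.mp hl).frequently.mono ?_
        intro n hn
        cases hun : u n with
        | inl x => exact absurd ⟨x, hun⟩ hn
        | inr y => exact ⟨y, rfl⟩
      obtain ⟨φ₁, hφ₁mono, hφ₁⟩ := Filter.extraction_of_frequently_atTop hr
      choose v hv using hφ₁
      obtain ⟨z, φ₂, hφ₂, hz⟩ := CompactSpace.tendsto_subseq v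
      refine ⟨Sum.inr z, φ₁ ∘ φ₂, hφ₁mono.comp hφ₂, ?_⟩
      have hconv := tendsto_iff_dist_tendsto_zero.mp hz
      refine hconv.congr fun j => ?_
      simp only [Function.comp_apply]
      rw [hv (φ₂ j)]
      rfl
  · -- diameter bound
    rintro (x | y) (x' | y') <;> simp only [rho]
    · exact (hexp x x').trans (hdistY _ _)
    · exact max_le hα1.le ((hDle x y').trans (hdistY _ _))
    · exact max_le hα1.le ((hDle x' y).trans (hdistY _ _))
    · exact hdistY _ _
  · -- diameter attained
    have hYne : Nonempty Y := by
      by_contra h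
      rw [not_nonempty_iff] at h
      rw [Set.univ_eq_empty_iff.mpr h, Metric.diam_empty] at hα1
      linarith
    obtain ⟨p, -, hp⟩ := isCompact_univ.exists_isMaxOn (Set.univ_nonempty)
      (continuous_dist (α := Y)).continuousOn
    have h1 : Metric.diam (Set.univ : Set Y) ≤ dist p.1 p.2 := by
      refine Metric.diam_le_of_forall_dist_le dist_nonneg ?_
      intro y _ y' _
      exact hp (Set.mem_univ (y, y'))
    exact ⟨Sum.inr p.1, Sum.inr p.2, le_antisymm (hdistY _ _) h1⟩
  · -- bijectivity
    have : Sum.map (F : X → X) (G : Y → Y) = ⇑(Equiv.sumCongr F.toEquiv G.toEquiv) := by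
      ext (x | y) <;> rfl
    rw [this]
    exact (Equiv.sumCongr F.toEquiv G.toEquiv).bijective
  · -- H uniformly continuous (pointwise form)
    rintro (x | y) γ hγ
    · obtain ⟨δ, hδ, hδc⟩ := Metric.continuous_iff.mp F.continuous x γ hγ
      refine ⟨min δ α, lt_min hδ hα0, ?_⟩
      rintro (x' | y') hb <;> simp only [rho, Sum.map_inl, Sum.map_inr] at *
      · rw [dist_comm]
        exact hδc x' (by rw [dist_comm]; exact hb.trans_le (min_le_left _ _))
      · exfalso
        have := le_max_left α (dist x (f.symm y'))
        have := min_le_right δ α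
        linarith
    · obtain ⟨δ, hδ, hδc⟩ := Metric.continuous_iff.mp G.continuous y γ hγ
      refine ⟨min δ α, lt_min hδ hα0, ?_⟩
      rintro (x' | y') hb <;> simp only [rho, Sum.map_inl, Sum.map_inr] at *
      · exfalso
        have := le_max_left α (dist x' (f.symm y))
        have := min_le_right δ α
        linarith
      · rw [dist_comm]
        exact hδc y' (by rw [dist_comm]; exact hb.trans_le (min_le_left _ _))
  · -- inverse continuous
    rintro (x | y) γ hγ
    · obtain ⟨δ, hδ, hδc⟩ := Metric.continuous_iff.mp F.symm.continuous (F x) γ hγ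
      refine ⟨min δ α, lt_min hδ hα0, ?_⟩
      rintro (x' | y') hb <;> simp only [rho, Sum.map_inl, Sum.map_inr] at *
      · have := hδc (F x') (by rw [dist_comm]; exact hb.trans_le (min_le_left _ _))
        simpa [dist_comm] using this
      · exfalso
        have := le_max_left α (dist (F x) (f.symm (G y')))
        have := min_le_right δ α
        linarith
    · obtain ⟨δ, hδ, hδc⟩ := Metric.continuous_iff.mp G.symm.continuous (G y) γ hγ
      refine ⟨min δ α, lt_min hδ hα0, ?_⟩
      rintro (x' | y') hb <;> simp only [rho, Sum.map_inl, Sum.map_inr] at *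
      · exfalso
        have := le_max_left α (dist (F x') (f.symm (G y)))
        have := min_le_right δ α
        linarith
      · have := hδc (G y') (by rw [dist_comm]; exact hb.trans_le (min_le_left _ _))
        simpa [dist_comm] using this
end
end

section
/- (Comparison of separation and spanning numbers under gluing.) With ρ, H as in the gluing construction, for all T > 0: (a) for every δ > 0, sep(Y, δ, d_T) ≤ sep(X⁻ ∪ Y, δ, ρ_T) ≤ 2·sep(Y, δ, d_T); and (b) for every δ > α, span(X⁻, δ, D_T) = span(X⁻ ∪ Y, δ, ρ_T). -/
noncomputable section

lemma dynMet_eq_sup' {Z : Type*} (d : Z → Z → ℝ) (F : Z → Z) {T : ℕ} (hT : 1 ≤ T) (x y : Z) :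
    dynMet d F T x y = Finset.univ.sup' (Finset.univ_nonempty_iff.mpr ⟨⟨0, hT⟩⟩)
      (fun t : Fin T => d (F^[(t : ℕ)] x) (F^[(t : ℕ)] y)) := by
  haveI : Nonempty (Fin T) := ⟨⟨0, hT⟩⟩
  rw [dynMet, Finset.sup'_univ_eq_ciSup]

lemma dynMet_lt_iff {Z : Type*} (d : Z → Z → ℝ) (F : Z → Z) {T : ℕ} (hT : 1 ≤ T)
    {x y : Z} {δ : ℝ} :
    dynMet d F T x y < δ ↔ ∀ t : Fin T, d (F^[(t : ℕ)] x) (F^[(t : ℕ)] y) < δ := by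
  rw [dynMet_eq_sup' d F hT, Finset.sup'_lt_iff]
  simp

lemma dynMet_le_iff {Z : Type*} (d : Z → Z → ℝ) (F : Z → Z) {T : ℕ} (hT : 1 ≤ T)
    {x y : Z} {δ : ℝ} :
    dynMet d F T x y ≤ δ ↔ ∀ t : Fin T, d (F^[(t : ℕ)] x) (F^[(t : ℕ)] y) ≤ δ := by
  rw [dynMet_eq_sup' d F hT, Finset.sup'_le_iff]
  simp

lemma le_dynMet {Z : Type*} (d : Z → Z → ℝ) (F : Z → Z) {T : ℕ} (hT : 1 ≤ T)
    (x y : Z) (t : Fin T) :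
    d (F^[(t : ℕ)] x) (F^[(t : ℕ)] y) ≤ dynMet d F T x y := by
  rw [dynMet_eq_sup' d F hT]
  exact Finset.le_sup' (fun t : Fin T => d (F^[(t : ℕ)] x) (F^[(t : ℕ)] y)) (Finset.mem_univ t)

lemma dynMet_congr {Z W : Type*} {d : Z → Z → ℝ} {d' : W → W → ℝ} {F : Z → Z} {F' : W → W}
    {T : ℕ} {x y : Z} {x' y' : W}
    (h : ∀ t : Fin T, d (F^[(t : ℕ)] x) (F^[(t : ℕ)] y)
        = d' (F'^[(t : ℕ)] x') (F'^[(t : ℕ)] y')) :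
    dynMet d F T x y = dynMet d' F' T x' y' := by
  unfold dynMet; exact iSup_congr h

lemma ciSup_max_fin {T : ℕ} (hT : 1 ≤ T) (α : ℝ) (g : Fin T → ℝ) :
    (⨆ t, max α (g t)) = max α (⨆ t, g t) := by
  haveI : Nonempty (Fin T) := ⟨⟨0, hT⟩⟩
  rw [← Finset.sup'_univ_eq_ciSup, ← Finset.sup'_univ_eq_ciSup]
  apply le_antisymm
  · exact Finset.sup'_le _ _ fun t _ => max_le_max le_rfl (Finset.le_sup' g (Finset.mem_univ t))
  · refine max_le ?_ (Finset.sup'_le _ _ fun t _ =>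
      le_trans (le_max_right α (g t)) (Finset.le_sup' (fun t => max α (g t)) (Finset.mem_univ t)))
    have t : Fin T := ⟨0, hT⟩
    exact le_trans (le_max_left α (g t)) (Finset.le_sup' (fun t => max α (g t)) (Finset.mem_univ t))

lemma dynMet_self {Z : Type*} [PseudoMetricSpace Z] (F : Z → Z) {T : ℕ} (hT : 1 ≤ T) (x : Z) :
    dynMet dist F T x x = 0 := by
  rw [dynMet_eq_sup' dist F hT]
  simp

lemma dynMet_comm {Z : Type*} [PseudoMetricSpace Z] (F : Z → Z) (T : ℕ) (x y : Z) :
    dynMet dist F T x y = dynMet dist F T y x :=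
  dynMet_congr fun t => dist_comm _ _

lemma dynMet_triangle {Z : Type*} [PseudoMetricSpace Z] (F : Z → Z) {T : ℕ} (hT : 1 ≤ T)
    (x y z : Z) :
    dynMet dist F T x z ≤ dynMet dist F T x y + dynMet dist F T y z := by
  rw [dynMet_le_iff dist F hT]
  intro t
  exact le_trans (dist_triangle _ (F^[(t : ℕ)] y) _)
    (add_le_add (le_dynMet dist F hT x y t) (le_dynMet dist F hT y z t))

/-- Comparison of separation and spanning numbers under gluing: with `ρ`, `H = F ∪ G` as in
the gluing construction, for all `T ≥ 1`:
(a) for every `δ > 0`, `sep(Y, δ, d_T) ≤ sep(X⁻ ∪ Y, δ, ρ_T) ≤ 2·sep(Y, δ, d_T)`;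
(b) for every `δ > α`, `span(X⁻, δ, D_T) = span(X⁻ ∪ Y, δ, ρ_T)`. -/
theorem stmt18 {X Y : Type*} [MetricSpace X] [CompactSpace X] [Nonempty X]
    [MetricSpace Y] [CompactSpace Y]
    (F : X ≃ₜ X) (G : Y ≃ₜ Y) (f : X ≃ₜ Y)
    (hconj : ∀ x, f (F x) = G (f x))
    (hexp : ∀ x x' : X, dist x x' ≤ dist (f x) (f x'))
    (α : ℝ)
    (hα1 : α < Metric.diam (Set.univ : Set Y))
    (hα2 : (1 / 2) * max (Metric.diam (Set.univ : Set X))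
        (Metric.diam (Set.univ : Set Y)) < α)
    (H : X ⊕ Y → X ⊕ Y) (hH : H = Sum.map F G)
    (T : ℕ) (hT : 1 ≤ T) :
    (∀ δ : ℝ, 0 < δ →
      sepNum (dynMet dist (G : Y → Y) T) δ Set.univ
          ≤ sepNum (dynMet (rho f α) H T) δ Set.univ ∧
      sepNum (dynMet (rho f α) H T) δ Set.univ
          ≤ 2 * sepNum (dynMet dist (G : Y → Y) T) δ Set.univ) ∧
    (∀ δ : ℝ, α < δ →
      spanNum (dynMet dist (F : X → X) T) δ Set.univ
        = spanNum (dynMet (rho f α) H T) δ Set.univ) := by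
  classical
  have hα0 : 0 < α :=
    lt_of_le_of_lt (mul_nonneg (by norm_num)
      (le_trans Metric.diam_nonneg (le_max_left _ _))) hα2
  -- semiconjugacy facts
  have hL : Function.Semiconj Sum.inl (F : X → X) H := fun x => by simp [hH]
  have hR : Function.Semiconj Sum.inr (G : Y → Y) H := fun y => by simp [hH]
  have hS : Function.Semiconj (f.symm : Y → X) (G : Y → Y) (F : X → X) := by
    intro y
    have := hconj (f.symm y)
    have h2 : f (F (f.symm y)) = G y := by simpa using this
    calc f.symm (G y) = f.symm (f (F (f.symm y))) := by rw [h2]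
      _ = F (f.symm y) := by simp
  have hF : Function.Semiconj (f : X → Y) (F : X → X) (G : Y → Y) := hconj
  have hLt : ∀ (t : ℕ) (x : X), H^[t] (Sum.inl x) = Sum.inl (F^[t] x) :=
    fun t x => ((hL.iterate_right t) x).symm
  have hRt : ∀ (t : ℕ) (y : Y), H^[t] (Sum.inr y) = Sum.inr (G^[t] y) :=
    fun t y => ((hR.iterate_right t) y).symm
  have hSt : ∀ (t : ℕ) (y : Y), f.symm (G^[t] y) = F^[t] (f.symm y) :=
    fun t y => (hS.iterate_right t) y
  have hFt : ∀ (t : ℕ) (x : X), f (F^[t] x) = G^[t] (f x) :=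
    fun t x => (hF.iterate_right t) x
  -- metric computations
  have hρll : ∀ x x' : X,
      dynMet (rho f α) H T (Sum.inl x) (Sum.inl x') = dynMet dist (F : X → X) T x x' := by
    intro x x'
    refine dynMet_congr fun t => ?_
    rw [hLt, hLt]; rfl
  have hρrr : ∀ y y' : Y,
      dynMet (rho f α) H T (Sum.inr y) (Sum.inr y') = dynMet dist (G : Y → Y) T y y' := by
    intro y y'
    refine dynMet_congr fun t => ?_
    rw [hRt, hRt]; rfl
  have hρlr : ∀ (x : X) (y : Y),
      dynMet (rho f α) H T (Sum.inl x) (Sum.inr y)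
        = max α (dynMet dist (F : X → X) T x (f.symm y)) := by
    intro x y
    have h1 : dynMet (rho f α) H T (Sum.inl x) (Sum.inr y)
        = ⨆ t : Fin T, max α (dist (F^[(t : ℕ)] x) (F^[(t : ℕ)] (f.symm y))) := by
      refine iSup_congr fun t => ?_
      show rho f α (H^[(t : ℕ)] (Sum.inl x)) (H^[(t : ℕ)] (Sum.inr y)) = _
      rw [hLt, hRt]
      show max α (dist (F^[(t : ℕ)] x) (f.symm (G^[(t : ℕ)] y))) = _
      rw [hSt]
    rw [h1, ciSup_max_fin hT]; rfl
  have hρrl : ∀ (x : X) (y : Y),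
      dynMet (rho f α) H T (Sum.inr y) (Sum.inl x)
        = max α (dynMet dist (F : X → X) T x (f.symm y)) := by
    intro x y
    have h1 : dynMet (rho f α) H T (Sum.inr y) (Sum.inl x)
        = ⨆ t : Fin T, max α (dist (F^[(t : ℕ)] x) (F^[(t : ℕ)] (f.symm y))) := by
      refine iSup_congr fun t => ?_
      show rho f α (H^[(t : ℕ)] (Sum.inr y)) (H^[(t : ℕ)] (Sum.inl x)) = _
      rw [hLt, hRt]
      show max α (dist (F^[(t : ℕ)] x) (f.symm (G^[(t : ℕ)] y))) = _
      rw [hSt]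
    rw [h1, ciSup_max_fin hT]; rfl
  -- expansion of f at the dynamical level
  have hXY : ∀ x x' : X,
      dynMet dist (F : X → X) T x x' ≤ dynMet dist (G : Y → Y) T (f x) (f x') := by
    intro x x'
    rw [dynMet_le_iff dist _ hT]
    intro t
    calc dist (F^[(t : ℕ)] x) (F^[(t : ℕ)] x')
        ≤ dist (f (F^[(t : ℕ)] x)) (f (F^[(t : ℕ)] x')) := hexp _ _
      _ = dist (G^[(t : ℕ)] (f x)) (G^[(t : ℕ)] (f x')) := by rw [hFt, hFt]
      _ ≤ dynMet dist (G : Y → Y) T (f x) (f x') := le_dynMet dist _ hT _ _ t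
  -- finite spanning sets for X (compactness)
  have hspanX : ∀ δ : ℝ, 0 < δ →
      ∃ S : Finset X, ∀ x : X, ∃ s ∈ S, dynMet dist (F : X → X) T x s < δ := by
    intro δ hδ
    have hopen : ∀ c : X, IsOpen {x : X | dynMet dist (F : X → X) T c x < δ} := by
      intro c
      have he : {x : X | dynMet dist (F : X → X) T c x < δ}
          = ⋂ t : Fin T, {x : X | dist (F^[(t : ℕ)] c) (F^[(t : ℕ)] x) < δ} := by
        ext x
        simp only [Set.mem_setOf_eq, Set.mem_iInter]
        exact dynMet_lt_iff dist _ hT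
      rw [he]
      exact isOpen_iInter_of_finite fun t =>
        isOpen_lt (continuous_const.dist (F.continuous.iterate _)) continuous_const
    obtain ⟨C, hC⟩ := isCompact_univ.elim_finite_subcover
      (fun c : X => {x : X | dynMet dist (F : X → X) T c x < δ}) hopen
      (by
        intro x _
        refine Set.mem_iUnion.mpr ⟨x, ?_⟩
        simp only [Set.mem_setOf_eq]
        rw [dynMet_self _ hT]; exact hδ)
    refine ⟨C, fun x => ?_⟩
    have := hC (Set.mem_univ x)
    simp only [Set.mem_iUnion, Set.mem_setOf_eq] at this
    obtain ⟨c, hc, hcx⟩ := this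
    exact ⟨c, hc, by rwa [dynMet_comm]⟩
  -- uniform bound for separated sets in Y (compactness)
  have hsepY : ∀ δ : ℝ, 0 < δ → ∃ N : ℕ, ∀ S : Finset Y,
      (∀ y ∈ S, ∀ y' ∈ S, y ≠ y' → δ ≤ dynMet dist (G : Y → Y) T y y') → S.card ≤ N := by
    intro δ hδ
    have hδ2 : 0 < δ / 2 := by linarith
    have hopen : ∀ c : Y, IsOpen {y : Y | dynMet dist (G : Y → Y) T c y < δ / 2} := by
      intro c
      have he : {y : Y | dynMet dist (G : Y → Y) T c y < δ / 2}
          = ⋂ t : Fin T, {y : Y | dist (G^[(t : ℕ)] c) (G^[(t : ℕ)] y) < δ / 2} := by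
        ext y
        simp only [Set.mem_setOf_eq, Set.mem_iInter]
        exact dynMet_lt_iff dist _ hT
      rw [he]
      exact isOpen_iInter_of_finite fun t =>
        isOpen_lt (continuous_const.dist (G.continuous.iterate _)) continuous_const
    obtain ⟨C, hC⟩ := isCompact_univ.elim_finite_subcover
      (fun c : Y => {y : Y | dynMet dist (G : Y → Y) T c y < δ / 2}) hopen
      (by
        intro y _
        refine Set.mem_iUnion.mpr ⟨y, ?_⟩
        simp only [Set.mem_setOf_eq]
        rw [dynMet_self _ hT]; exact hδ2)
    have hch : ∀ y : Y, ∃ c ∈ C, dynMet dist (G : Y → Y) T c y < δ / 2 := by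
      intro y
      have := hC (Set.mem_univ y)
      simp only [Set.mem_iUnion, Set.mem_setOf_eq] at this
      obtain ⟨c, hc, h⟩ := this
      exact ⟨c, hc, h⟩
    choose g hg1 hg2 using hch
    refine ⟨C.card, fun S hsep => ?_⟩
    refine Finset.card_le_card_of_injOn g (fun s _ => hg1 s) ?_
    intro s hs s' hs' heq
    by_contra hne
    have h1 : δ ≤ dynMet dist (G : Y → Y) T s s' := hsep s hs s' hs' hne
    have h2 : dynMet dist (G : Y → Y) T s s'
        ≤ dynMet dist (G : Y → Y) T s (g s) + dynMet dist (G : Y → Y) T (g s) s' :=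
      dynMet_triangle _ hT _ _ _
    have h3 : dynMet dist (G : Y → Y) T s (g s) < δ / 2 := by
      rw [dynMet_comm]; exact hg2 s
    have h4 : dynMet dist (G : Y → Y) T (g s) s' < δ / 2 := by
      rw [heq]; exact hg2 s'
    linarith
  constructor
  · -- part (a)
    intro δ hδ
    obtain ⟨N, hN⟩ := hsepY δ hδ
    rw [sepNum, sepNum]
    set B : Set ℕ := {n | ∃ S : Finset Y, ↑S ⊆ (Set.univ : Set Y) ∧
      (∀ y ∈ S, ∀ y' ∈ S, y ≠ y' → δ ≤ dynMet dist (G : Y → Y) T y y') ∧ S.card = n} with hBdef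
    set A : Set ℕ := {n | ∃ S : Finset (X ⊕ Y), ↑S ⊆ (Set.univ : Set (X ⊕ Y)) ∧
      (∀ a ∈ S, ∀ b ∈ S, a ≠ b → δ ≤ dynMet (rho f α) H T a b) ∧ S.card = n} with hAdef
    have hBne : B.Nonempty := ⟨0, ∅, by simp⟩
    have hAne : A.Nonempty := ⟨0, ∅, by simp⟩
    have hBbdd : BddAbove B := by
      refine ⟨N, fun n hn => ?_⟩
      obtain ⟨S, -, hsep, rfl⟩ := hn
      exact hN S hsep
    -- splitting an (X ⊕ Y)-separated set
    have hsplit : ∀ n ∈ A, ∃ m₁ ∈ B, ∃ m₂ ∈ B, n = m₁ + m₂ := by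
      intro n hn
      obtain ⟨S, -, hsep, rfl⟩ := hn
      refine ⟨(S.toLeft.image f).card, ?_, S.toRight.card, ?_, ?_⟩
      · refine ⟨S.toLeft.image f, Set.subset_univ _, ?_, rfl⟩
        intro y hy y' hy' hne
        simp only [Finset.mem_image, Finset.mem_toLeft] at hy hy'
        obtain ⟨x, hx, rfl⟩ := hy
        obtain ⟨x', hx', rfl⟩ := hy'
        have hxx : x ≠ x' := fun h => hne (by rw [h])
        have := hsep _ hx _ hx' (fun h => hxx (Sum.inl_injective h))
        rw [hρll] at this
        exact le_trans this (hXY x x')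
      · refine ⟨S.toRight, Set.subset_univ _, ?_, rfl⟩
        intro y hy y' hy' hne
        rw [Finset.mem_toRight] at hy hy'
        have := hsep _ hy _ hy' (fun h => hne (Sum.inr_injective h))
        rwa [hρrr] at this
      · rw [Finset.card_image_of_injective _ f.injective,
          Finset.card_toLeft_add_card_toRight]
    have hAbdd : BddAbove A := by
      refine ⟨N + N, fun n hn => ?_⟩
      obtain ⟨m₁, hm₁, m₂, hm₂, rfl⟩ := hsplit n hn
      obtain ⟨S₁, -, h₁, rfl⟩ := hm₁
      obtain ⟨S₂, -, h₂, rfl⟩ := hm₂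
      exact add_le_add (hN _ h₁) (hN _ h₂)
    constructor
    · -- sep(Y) ≤ sep(X ⊕ Y)
      refine csSup_le_csSup hAbdd hBne ?_
      intro n hn
      obtain ⟨S, -, hsep, rfl⟩ := hn
      refine ⟨S.map ⟨Sum.inr, Sum.inr_injective⟩, Set.subset_univ _, ?_, Finset.card_map _⟩
      intro a ha b hb hne
      simp only [Finset.mem_map, Function.Embedding.coeFn_mk] at ha hb
      obtain ⟨y, hy, rfl⟩ := ha
      obtain ⟨y', hy', rfl⟩ := hb
      rw [hρrr]
      exact hsep y hy y' hy' (fun h => hne (by rw [h]))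
    · -- sep(X ⊕ Y) ≤ 2 sep(Y)
      refine csSup_le hAne ?_
      intro n hn
      obtain ⟨m₁, hm₁, m₂, hm₂, rfl⟩ := hsplit n hn
      rw [two_mul]
      exact add_le_add (le_csSup hBbdd hm₁) (le_csSup hBbdd hm₂)
  · -- part (b)
    intro δ hδα
    have hδ0 : 0 < δ := hα0.trans hδα
    rw [spanNum, spanNum]
    set P : Set ℕ := {n | ∃ S : Finset X, ↑S ⊆ (Set.univ : Set X) ∧
      (∀ x : X, x ∈ (Set.univ : Set X) → ∃ s ∈ S, dynMet dist (F : X → X) T x s < δ) ∧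
      S.card = n} with hPdef
    set Q : Set ℕ := {n | ∃ S : Finset (X ⊕ Y), ↑S ⊆ (Set.univ : Set (X ⊕ Y)) ∧
      (∀ a : X ⊕ Y, a ∈ (Set.univ : Set (X ⊕ Y)) → ∃ s ∈ S, dynMet (rho f α) H T a s < δ) ∧
      S.card = n} with hQdef
    -- mapping X-spanning sets to (X ⊕ Y)-spanning sets
    have hPQ : ∀ n ∈ P, n ∈ Q := by
      intro n hn
      obtain ⟨S, -, hspan, rfl⟩ := hn
      refine ⟨S.map ⟨Sum.inl, Sum.inl_injective⟩, Set.subset_univ _, ?_, Finset.card_map _⟩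
      rintro (x | y) -
      · obtain ⟨s, hs, hds⟩ := hspan x (Set.mem_univ x)
        refine ⟨Sum.inl s, Finset.mem_map_of_mem _ hs, ?_⟩
        rw [hρll]; exact hds
      · obtain ⟨s, hs, hds⟩ := hspan (f.symm y) (Set.mem_univ _)
        refine ⟨Sum.inl s, Finset.mem_map_of_mem _ hs, ?_⟩
        rw [hρrl]
        exact max_lt hδα (by rwa [dynMet_comm] at hds)
    have hPne : P.Nonempty := by
      obtain ⟨S, hS⟩ := hspanX δ hδ0
      exact ⟨S.card, S, Set.subset_univ _, fun x _ => hS x, rfl⟩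
    have hQne : Q.Nonempty := by
      obtain ⟨n, hn⟩ := hPne
      exact ⟨n, hPQ n hn⟩
    apply le_antisymm
    · -- sInf P ≤ sInf Q : project an (X ⊕ Y)-spanning set to X
      obtain ⟨S, -, hspan, hcard⟩ := Nat.sInf_mem hQne
      have hmem : (S.image (Sum.elim id (f.symm : Y → X))).card ∈ P := by
        refine ⟨S.image (Sum.elim id (f.symm : Y → X)), Set.subset_univ _, ?_, rfl⟩
        intro x _
        obtain ⟨s, hs, hds⟩ := hspan (Sum.inl x) (Set.mem_univ _)
        cases s with
        | inl x' =>
          refine ⟨x', Finset.mem_image_of_mem _ hs, ?_⟩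
          rwa [hρll] at hds
        | inr y =>
          refine ⟨f.symm y, Finset.mem_image_of_mem _ hs, ?_⟩
          rw [hρlr] at hds
          exact lt_of_le_of_lt (le_max_right α _) hds
      calc sInf P ≤ (S.image (Sum.elim id (f.symm : Y → X))).card := Nat.sInf_le hmem
        _ ≤ S.card := Finset.card_image_le
        _ = sInf Q := hcard
    · -- sInf Q ≤ sInf P
      exact Nat.sInf_le (hPQ _ (Nat.sInf_mem hPne))
end
end
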